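/- arXiv:1502.05937 — 5 statements merged into one kernel-verified Lean document; each statement's English description precedes it below -/
import Mathlib

section
/- Assume that every character of [0..σ] occurs in the circular string T and that M^r_T ≠ ∅. Then the number of runs of the Burrows–Wheeler transform of T satisfies r_T ≥ |[0..σ] \ ∪_{W ∈ M^r_T} Σ^ℓ_T(W)| + Σ_{W ∈ M^r_T} |Σ^ℓ_T(W)| − |M^r_T| + 1. -/
/-! Basic definitions: strings are lists of naturals; the separator `#` is `0`;
the alphabet is `Σ = [1..σ]`. Occurrences are taken in the circular version of `T`. -/

noncomputable section
open Classical

/-- `T` is a string over the alphabet `[1..σ]` followed by the separator `# = 0`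
(so `#` occurs in `T` exactly once, at the last position). -/
def Wellformed (σ : ℕ) (T : List ℕ) : Prop :=
  ∃ S : List ℕ, T = S ++ [0] ∧ ∀ c ∈ S, 1 ≤ c ∧ c ≤ σ

/-- The rotation of `T` starting at position `i`. -/
def rot (T : List ℕ) (i : ℕ) : List ℕ := T.drop i ++ T.take i

/-- `W` occurs at position `i` of the circular version of `T`. -/
def CircOccAt (T W : List ℕ) (i : ℕ) : Prop :=
  ∀ j < W.length, W.getD j 0 = T.getD ((i + j) % T.length) 0

/-- `𝒫_T(W)`: the set of starting positions of occurrences of `W` in the circular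
version of `T`. -/
def Pset (T W : List ℕ) : Finset ℕ :=
  (Finset.range T.length).filter (fun i => CircOccAt T W i)

/-- `W` occurs in the circular version of `T`. -/
def OccursCirc (T W : List ℕ) : Prop := (Pset T W).Nonempty

/-- `Σ^ℓ_T(W)`: the set of characters `a` such that `aW` occurs in circular `T`. -/
def SigmaL (T W : List ℕ) : Finset ℕ :=
  T.toFinset.filter (fun a => OccursCirc T (a :: W))

/-- `Σ^r_T(W)`: the set of characters `b` such that `Wb` occurs in circular `T`. -/
def SigmaR (T W : List ℕ) : Finset ℕ :=
  T.toFinset.filter (fun b => OccursCirc T (W ++ [b]))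

/-- `W` is left-maximal in `T`. -/
def LeftMaximal (T W : List ℕ) : Prop := 1 < (SigmaL T W).card

/-- `W` is right-maximal in `T`. -/
def RightMaximal (T W : List ℕ) : Prop := 1 < (SigmaR T W).card

/-- The (finite) collection of substrings of the circular version of `T`. -/
def circSubstrings (T : List ℕ) : Finset (List ℕ) :=
  ((Finset.range T.length) ×ˢ (Finset.range (T.length + 1))).image
    (fun p => (rot T p.1).take p.2)

/-- `ℳ_T`: the set of nonempty maximal repeats of `T`, i.e. repeats that are both
left-maximal and right-maximal.  (Every maximal repeat occurs in circular `T` and has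
length at most `|T|`, so it belongs to `circSubstrings T`.) -/
def MaxRepeats (T : List ℕ) : Finset (List ℕ) :=
  (circSubstrings T).filter
    (fun W => W ≠ [] ∧ 1 < (Pset T W).card ∧ LeftMaximal T W ∧ RightMaximal T W)

/-- Strict lexicographic comparison of strings (a proper prefix is smaller). -/
def lexLt : List ℕ → List ℕ → Bool
  | [], [] => false
  | [], _ :: _ => true
  | _ :: _, [] => false
  | a :: A, b :: B => decide (a < b) || (a == b && lexLt A B)

/-- Non-strict lexicographic comparison. -/
def lexLe (A B : List ℕ) : Bool := !(lexLt B A)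

/-- The Burrows–Wheeler transform of `T`: the `i`-th character of `BWT T` is the last
character of the lexicographically `i`-th rotation of `T`. -/
def BWT (T : List ℕ) : List ℕ :=
  (((List.range T.length).map (rot T)).mergeSort lexLe).map (fun R => R.getLast!)

/-- The number of runs of a string, i.e. the number of maximal intervals on which all
characters are equal. -/
def numRuns : List ℕ → ℕ
  | [] => 0
  | [_] => 1
  | a :: b :: l => (if a = b then 0 else 1) + numRuns (b :: l)


noncomputable section
open Classical

/-- `ℳ^r_T`: the set of rightmost maximal repeats of `T`: maximal repeats `W` such that
no string `WV` with `V` nonempty is left-maximal in `T`. -/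
def RightmostMaxRepeats (T : List ℕ) : Finset (List ℕ) :=
  (MaxRepeats T).filter (fun W => ∀ V : List ℕ, V ≠ [] → ¬ LeftMaximal T (W ++ V))

/-- `Y` is the shortest right-maximal extension of `X` in `T`: the shortest
right-maximal string of `T` having `X` as a prefix. -/
def ShortestRightMaxExt (T X Y : List ℕ) : Prop :=
  X <+: Y ∧ RightMaximal T Y ∧
    ∀ Z : List ℕ, X <+: Z → RightMaximal T Z → Y.length ≤ Z.length

/-- `ℱ^r_T`: pairs `(V, b)` with `V ∈ ℳ_T ∪ {ε}` and `b ∈ Σ^r_T(V)` such that either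
`Vb` occurs exactly once in circular `T`, or the shortest right-maximal extension of
`Vb` is not a maximal repeat of `T`.  These pairs correspond to the suffix-tree edges
of `T` from maximal-repeat nodes to non-maximal-repeat nodes. -/
def Fr (T : List ℕ) : Finset (List ℕ × ℕ) :=
  ((insert ([] : List ℕ) (MaxRepeats T)) ×ˢ T.toFinset).filter
    (fun p => p.2 ∈ SigmaR T p.1 ∧
      ((Pset T (p.1 ++ [p.2])).card = 1 ∨
        ∀ Y : List ℕ, ShortestRightMaxExt T (p.1 ++ [p.2]) Y → Y ∉ MaxRepeats T))

/-- `e_T`: the number of right extensions of maximal repeats of `T`, i.e. the number of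
pairs `(V, b)` with `V ∈ ℳ_T ∪ {ε}` and `b ∈ Σ^r_T(V)`.  This equals the number of
arcs of the CDAWG of `T`. -/
def eCount (T : List ℕ) : ℕ :=
  ∑ V ∈ insert ([] : List ℕ) (MaxRepeats T), (SigmaR T V).card

/-- The next LZ77 factor, to be placed at position `k` of `T`, may be `F` if `F` is a
single character (every single character of `T` has a source among the `σ+1` distinct
characters virtually preceding `T`), or if `F` has an occurrence in `T` starting at a
position `j` strictly before `k`. -/
def LZsource (T : List ℕ) (k : ℕ) (F : List ℕ) : Prop :=
  F.length = 1 ∨ ∃ j, j < k ∧ F <+: T.drop j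

/-- `fs` is the LZ77 factorization of `T` (greedy: each factor is the longest prefix of
the remaining suffix admitting a source). -/
def IsLZ77 (T : List ℕ) (fs : List (List ℕ)) : Prop :=
  fs.flatten = T ∧ (∀ F ∈ fs, F ≠ []) ∧
    ∀ i, (h : i < fs.length) →
      LZsource T ((fs.take i).flatten).length (fs.get ⟨i, h⟩) ∧
      ∀ F' : List ℕ, F' <+: T.drop ((fs.take i).flatten).length →
        (fs.get ⟨i, h⟩).length < F'.length →
          ¬ LZsource T ((fs.take i).flatten).length F'

/-- `N_T(X)`: the number of rotations of `T` lexicographically smaller than `X`. -/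
def Nrank (T X : List ℕ) : ℕ :=
  ((List.range T.length).filter (fun i => lexLt (rot T i) X)).length

/-- The string `a b a² b a³ b ⋯ aˣ b #`. -/
def Tx (a b x : ℕ) : List ℕ :=
  (((List.range x).map (fun i => List.replicate (i + 1) a ++ [b])).flatten) ++ [0]

end

/-!
In `BWT T` the rotations with prefix `W` occupy an interval whose characters are exactly
`Σ^ℓ_T(W)`, so that interval contains at least `|Σ^ℓ_T(W)| - 1` run boundaries. For rightmost
maximal repeats these intervals are pairwise disjoint: if `V` were a proper prefix of `W`, then
`W` would be a left-maximal proper extension of `V`. A character `c` lying in no `Σ^ℓ_T(W)` still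
occurs in the BWT, and walking from an occurrence of `c` towards a position inside one of the
intervals, the first boundary met is adjacent to `c`. These boundaries are pairwise distinct
and lie outside the intervals, and the first run adds one more.
-/

open Finset

theorem List.IsPrefix.of_le_of_le {α : Type*} [LinearOrder α] :
    ∀ {W A B C : List α}, W <+: A → W <+: C → A ≤ B → B ≤ C → W.length ≤ B.length → W <+: B
  | [], _, _, _, _, _, _, _, _ => List.nil_prefix
  | _ :: _, _, [], _, _, _, _, _, hlen => by simp at hlen
  | w :: W, _, b :: B, _, ⟨A, rfl⟩, ⟨C, rfl⟩, hAB, hBC, hlen => by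
    rw [List.cons_append, ← not_lt, List.cons_lt_cons_iff, not_or] at hAB hBC
    obtain rfl : w = b := le_antisymm (not_lt.mp hAB.1) (not_lt.mp hBC.1)
    have hAB : W ++ A ≤ B := not_lt.mp fun h => hAB.2 ⟨rfl, h⟩
    have hBC : B ≤ W ++ C := not_lt.mp fun h => hBC.2 ⟨rfl, h⟩
    exact List.cons_prefix_cons.mpr
      ⟨rfl, of_le_of_le (List.prefix_append W A) (List.prefix_append W C) hAB hBC
        (by simpa using hlen)⟩

theorem List.prefix_iff_forall_getD {α : Type*} {W L : List α} (d : α)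
    (h : W.length ≤ L.length) : W <+: L ↔ ∀ j < W.length, W.getD j d = L.getD j d := by
  rw [List.prefix_iff_getElem]
  refine ⟨fun ⟨_, hj⟩ j hjW => ?_, fun hj => ⟨h, fun j hjW => ?_⟩⟩
  · rw [List.getD_eq_getElem _ _ hjW, List.getD_eq_getElem _ _ (by omega), hj j hjW]
  · have := hj j hjW
    rwa [List.getD_eq_getElem _ _ hjW, List.getD_eq_getElem _ _ (by omega)] at this

section Boundaries

variable {α : Type*} [DecidableEq α] (f : ℕ → α)

def boundaries (n : ℕ) : Finset ℕ := {i ∈ range (n - 1) | f i ≠ f (i + 1)}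

variable {f}

theorem exists_boundary_of_lt {p q : ℕ} (hpq : p < q) (h : f p ≠ f q) :
    ∃ b, p ≤ b ∧ b < q ∧ f b ≠ f (b + 1) ∧ f b = f p := by
  induction q, hpq using Nat.le_induction with
  | base => exact ⟨p, le_rfl, p.lt_succ_self, h, rfl⟩
  | succ q hpq ih =>
    by_cases hq : f p = f q
    · exact ⟨q, by omega, q.lt_succ_self, hq ▸ h, hq.symm⟩
    · obtain ⟨b, hpb, hbq, hb, hfb⟩ := ih hq
      exact ⟨b, hpb, by omega, hb, hfb⟩

theorem exists_boundary_of_gt {p q : ℕ} (hqp : q < p) (h : f p ≠ f q) :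
    ∃ b, q ≤ b ∧ b < p ∧ f b ≠ f (b + 1) ∧ f (b + 1) = f p := by
  induction p, hqp using Nat.le_induction with
  | base => exact ⟨q, le_rfl, q.lt_succ_self, Ne.symm h, rfl⟩
  | succ p hqp ih =>
    by_cases hp : f p = f (p + 1)
    · obtain ⟨b, hqb, hbp, hb, hfb⟩ := ih (hp ▸ h)
      exact ⟨b, hqb, by omega, hb, hfb.trans hp⟩
    · exact ⟨p, by omega, p.lt_succ_self, hp, rfl⟩

theorem card_image_le_card_boundaries_add_one {S : Finset ℕ} (hS : (S : Set ℕ).OrdConnected) :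
    #(S.image f) ≤ #{i ∈ S | i + 1 ∈ S ∧ f i ≠ f (i + 1)} + 1 := by
  rcases S.eq_empty_or_nonempty with rfl | hne
  · simp
  set m := S.min' hne
  have hm : m ∈ S := S.min'_mem hne
  have hb : ∀ c ∈ (S.image f).erase (f m), ∃ b ∈ {i ∈ S | i + 1 ∈ S ∧ f i ≠ f (i + 1)},
      f (b + 1) = c := by
    intro c hc
    obtain ⟨hcm, hc⟩ := Finset.mem_erase.mp hc
    obtain ⟨p, hp, rfl⟩ := Finset.mem_image.mp hc
    have hmp : m < p := lt_of_le_of_ne (S.min'_le p hp) (by rintro rfl; exact hcm rfl)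
    obtain ⟨b, hmb, hbp, hb, hfb⟩ := exists_boundary_of_gt hmp hcm
    have hmem : ∀ i, m ≤ i → i ≤ p → i ∈ S := fun i h₁ h₂ =>
      hS.out hm hp ⟨h₁, h₂⟩
    exact ⟨b, Finset.mem_filter.mpr ⟨hmem b hmb (by omega), hmem (b + 1) (by omega) hbp, hb⟩, hfb⟩
  choose! g hg hgf using hb
  have hinj := Finset.card_le_card_of_injOn g hg fun c hc c' hc' h => (hgf c hc).symm.trans
    (h ▸ hgf c' hc')
  have herase := Finset.card_erase_add_one (Finset.mem_image_of_mem f hm)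
  omega

theorem card_le_card_boundaries_touching {n q : ℕ} {U : Finset α} (hq : q < n) (hqU : f q ∉ U)
    (hU : ∀ c ∈ U, ∃ p < n, f p = c) :
    #U ≤ #{i ∈ boundaries f n | f i ∈ U ∨ f (i + 1) ∈ U} := by
  -- the first boundary met walking from an occurrence of `c` towards `q` carries `c`, on its
  -- left if it lies before `q` and on its right otherwise; this makes the choice injective
  have hb : ∀ c ∈ U, ∃ b ∈ {i ∈ boundaries f n | f i ∈ U ∨ f (i + 1) ∈ U},
      (b < q ∧ f b = c) ∨ (q ≤ b ∧ f (b + 1) = c) := by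
    intro c hc
    obtain ⟨p, hpn, rfl⟩ := hU c hc
    have hpq : f p ≠ f q := fun h => hqU (h ▸ hc)
    rcases lt_trichotomy p q with hlt | rfl | hgt
    · obtain ⟨b, hpb, hbq, hb, hfb⟩ := exists_boundary_of_lt hlt hpq
      refine ⟨b, ?_, Or.inl ⟨hbq, hfb⟩⟩
      simp only [boundaries, Finset.mem_filter, Finset.mem_range]
      exact ⟨⟨by omega, hb⟩, Or.inl (hfb ▸ hc)⟩
    · exact absurd rfl hpq
    · obtain ⟨b, hqb, hbp, hb, hfb⟩ := exists_boundary_of_gt hgt hpq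
      refine ⟨b, ?_, Or.inr ⟨hqb, hfb⟩⟩
      simp only [boundaries, Finset.mem_filter, Finset.mem_range]
      exact ⟨⟨by omega, hb⟩, Or.inr (hfb ▸ hc)⟩
  choose! g hg hgf using hb
  refine Finset.card_le_card_of_injOn g hg fun c hc c' hc' h => ?_
  rcases hgf c hc with ⟨h₁, h₁'⟩ | ⟨h₁, h₁'⟩ <;> rcases hgf c' hc' with ⟨h₂, h₂'⟩ | ⟨h₂, h₂'⟩
  · rw [← h₁', ← h₂', h]
  · omega
  · omega
  · rw [← h₁', ← h₂', h]

theorem card_add_sum_card_image_le {ι : Type*} {n : ℕ} {M : Finset ι} {I : ι → Finset ℕ}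
    {U : Finset α} (hIn : ∀ x ∈ M, ∀ p ∈ I x, p < n)
    (hI : ∀ x ∈ M, (I x : Set ℕ).OrdConnected) (hdisj : (M : Set ι).PairwiseDisjoint I)
    (hU : ∀ c ∈ U, ∃ p < n, f p = c) (hIU : ∀ x ∈ M, ∀ p ∈ I x, f p ∉ U)
    {q : ℕ} (hq : q < n) (hqU : f q ∉ U) :
    #U + ∑ x ∈ M, #((I x).image f) ≤ #(boundaries f n) + #M := by
  set B : ι → Finset ℕ := fun x => {i ∈ I x | i + 1 ∈ I x ∧ f i ≠ f (i + 1)}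
  set BU := {i ∈ boundaries f n | f i ∈ U ∨ f (i + 1) ∈ U}
  have hinner : ∑ x ∈ M, #((I x).image f) ≤ #(M.biUnion B) + #M := by
    rw [Finset.card_biUnion fun x hx y hy hxy =>
      (hdisj hx hy hxy).mono (Finset.filter_subset _ _) (Finset.filter_subset _ _),
      Finset.card_eq_sum_ones M, ← Finset.sum_add_distrib]
    exact Finset.sum_le_sum fun x hx => card_image_le_card_boundaries_add_one (hI x hx)
  have hsub : M.biUnion B ∪ BU ⊆ boundaries f n := by
    refine Finset.union_subset (fun i hi => ?_) (Finset.filter_subset _ _)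
    obtain ⟨x, hx, hi⟩ := Finset.mem_biUnion.mp hi
    obtain ⟨hi, hi1, hb⟩ := Finset.mem_filter.mp hi
    simp only [boundaries, Finset.mem_filter, Finset.mem_range]
    exact ⟨by have := hIn x hx _ hi1; omega, hb⟩
  have hdisjU : Disjoint (M.biUnion B) BU := by
    refine Finset.disjoint_left.mpr fun i hi hiU => ?_
    obtain ⟨x, hx, hi⟩ := Finset.mem_biUnion.mp hi
    obtain ⟨hi, hi1, -⟩ := Finset.mem_filter.mp hi
    rcases (Finset.mem_filter.mp hiU).2 with h | h
    exacts [hIU x hx i hi h, hIU x hx (i + 1) hi1 h]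
  have hcard := Finset.card_le_card hsub
  rw [Finset.card_union_of_disjoint hdisjU] at hcard
  have hBU : #U ≤ #BU := card_le_card_boundaries_touching hq hqU hU
  omega

end Boundaries

theorem numRuns_eq_card_boundaries_add_one :
    ∀ L : List ℕ, L ≠ [] → numRuns L = #(boundaries (L.getD · 0) L.length) + 1
  | [], h => absurd rfl h
  | [_], _ => rfl
  | a :: b :: l, _ => by
    rw [numRuns, numRuns_eq_card_boundaries_add_one (b :: l) (List.cons_ne_nil _ _)]
    simp only [boundaries, Finset.card_filter, List.length_cons, Nat.add_sub_cancel]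
    rw [Finset.sum_range_succ']
    simp only [List.getD_cons_succ, List.getD_cons_zero]
    split_ifs <;> omega

section Rotations

variable {T W : List ℕ}

theorem getD_rot {i k : ℕ} (hi : i ≤ T.length) (hk : k < T.length) :
    (rot T i).getD k 0 = T.getD ((i + k) % T.length) 0 := by
  have hlen : (rot T i).length = T.length := by simp [rot]; omega
  rw [List.getD_eq_getElem _ _ (by omega), List.getD_eq_getElem _ _ (Nat.mod_lt _ (by omega))]
  simp only [rot, List.getElem_append, List.length_drop, List.getElem_drop, List.getElem_take]
  split_ifs
  · congr 1; rw [Nat.mod_eq_of_lt (by omega)]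
  · congr 1; rw [Nat.mod_eq_sub_mod (by omega), Nat.mod_eq_of_lt (by omega)]; omega

theorem circOccAt_iff_prefix_rot {i : ℕ} (hi : i ≤ T.length) (hW : W.length ≤ T.length) :
    CircOccAt T W i ↔ W <+: rot T i := by
  rw [List.prefix_iff_forall_getD 0 (by simp [rot]; omega)]
  exact forall₂_congr fun j hj => by rw [getD_rot hi (by omega)]

theorem circOccAt_cons_iff {a j : ℕ} :
    CircOccAt T (a :: W) j ↔ T.getD (j % T.length) 0 = a ∧ CircOccAt T W (j + 1) := by
  simp only [CircOccAt, List.length_cons, Nat.forall_lt_succ_left, List.getD_cons_zero,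
    List.getD_cons_succ, Nat.add_zero, eq_comm (a := a), ← Nat.add_assoc, Nat.add_right_comm j]

theorem getLast!_rot_succ {j : ℕ} (hj : j < T.length) : (rot T (j + 1)).getLast! = T.getD j 0 := by
  have hne : T.take (j + 1) ≠ [] := List.ne_nil_of_length_pos (by simp; omega)
  unfold rot
  rw [List.getLast!_of_getLast? (List.getLast?_eq_some_getLast (by simp [hne])),
    List.getLast_append_of_ne_nil _ hne, List.getLast_eq_getElem, List.getD_eq_getElem _ _ hj]
  simp [Nat.min_eq_left (show j + 1 ≤ T.length by omega)]

theorem mem_SigmaL_iff (hW : W.length ≤ T.length) {a : ℕ} :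
    a ∈ SigmaL T W ↔ ∃ j < T.length, W <+: rot T (j + 1) ∧ (rot T (j + 1)).getLast! = a := by
  simp only [SigmaL, OccursCirc, Pset, Finset.mem_filter, Finset.Nonempty, Finset.mem_range,
    List.mem_toFinset, circOccAt_cons_iff]
  constructor
  · rintro ⟨-, j, hj, hja, hocc⟩
    rw [Nat.mod_eq_of_lt hj] at hja
    exact ⟨j, hj, (circOccAt_iff_prefix_rot hj hW).mp hocc, by rw [getLast!_rot_succ hj, hja]⟩
  · rintro ⟨j, hj, hpre, rfl⟩
    rw [getLast!_rot_succ hj, List.getD_eq_getElem _ _ hj]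
    exact ⟨List.getElem_mem hj, j, hj, by rw [Nat.mod_eq_of_lt hj, List.getD_eq_getElem _ _ hj],
      (circOccAt_iff_prefix_rot hj hW).mpr hpre⟩

theorem mem_SigmaL_nil {a : ℕ} : a ∈ SigmaL T [] ↔ a ∈ T := by
  rw [mem_SigmaL_iff (Nat.zero_le _), List.mem_iff_getElem]
  constructor
  · rintro ⟨j, hj, -, rfl⟩
    exact ⟨j, hj, by rw [getLast!_rot_succ hj, List.getD_eq_getElem _ _ hj]⟩
  · rintro ⟨j, hj, rfl⟩
    exact ⟨j, hj, List.nil_prefix, by rw [getLast!_rot_succ hj, List.getD_eq_getElem _ _ hj]⟩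

end Rotations

theorem lexLt_eq_lex : ∀ A B : List ℕ, lexLt A B = A.lex B
  | [], [] => rfl
  | [], _ :: _ => rfl
  | _ :: _, [] => rfl
  | a :: A, b :: B => by simp only [lexLt, List.lex, lexLt_eq_lex A B]

theorem lexLe_iff_le {A B : List ℕ} : lexLe A B = true ↔ A ≤ B := by
  simp [lexLe, lexLt_eq_lex]

section SortedRotations

variable {T W : List ℕ}

def sortedRotations (T : List ℕ) : List (List ℕ) :=
  ((List.range T.length).map (rot T)).mergeSort lexLe

theorem length_sortedRotations : (sortedRotations T).length = T.length := by
  simp [sortedRotations]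

theorem mem_sortedRotations {R : List ℕ} :
    R ∈ sortedRotations T ↔ ∃ j < T.length, rot T (j + 1) = R := by
  have hrot : rot T T.length = rot T 0 := by simp [rot]
  simp only [sortedRotations, List.mem_mergeSort, List.mem_map, List.mem_range]
  constructor
  · rintro ⟨_ | i, hi, rfl⟩
    · exact ⟨T.length - 1, by omega, by rw [Nat.sub_add_cancel hi, hrot]⟩
    · exact ⟨i, by omega, rfl⟩
  · rintro ⟨j, hj, rfl⟩
    rcases (Nat.succ_le_of_lt hj).lt_or_eq with h | h
    · exact ⟨j + 1, h, rfl⟩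
    · exact ⟨0, by omega, by rw [show j + 1 = T.length from h, hrot]⟩

theorem exists_rot_eq_getD_sortedRotations {p : ℕ} (hp : p < T.length) :
    ∃ j < T.length, rot T (j + 1) = (sortedRotations T).getD p [] := by
  have hp' : p < (sortedRotations T).length := length_sortedRotations ▸ hp
  exact mem_sortedRotations.mp (List.getD_eq_getElem _ _ hp' ▸ List.getElem_mem hp')

theorem sortedRotations_le {p q : ℕ} (hpq : p ≤ q) (hq : q < T.length) :
    (sortedRotations T).getD p [] ≤ (sortedRotations T).getD q [] := by
  have hq' : q < (sortedRotations T).length := length_sortedRotations ▸ hq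
  rw [List.getD_eq_getElem _ _ (by omega), List.getD_eq_getElem _ _ hq']
  rcases hpq.lt_or_eq with h | rfl
  · rw [← lexLe_iff_le]
    refine List.pairwise_iff_getElem.mp (List.pairwise_mergeSort ?_ ?_ _) p q _ hq' h
    · simp only [lexLe_iff_le]; exact fun _ _ _ => le_trans
    · simpa [lexLe_iff_le] using le_total
  · exact le_rfl

theorem getD_BWT (p : ℕ) : (BWT T).getD p 0 = ((sortedRotations T).getD p []).getLast! :=
  List.getD_map (l := sortedRotations T) [] List.getLast!

def bwtInterval (T W : List ℕ) : Finset ℕ :=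
  {p ∈ range T.length | W <+: (sortedRotations T).getD p []}

theorem image_bwtInterval (hW : W.length ≤ T.length) :
    (bwtInterval T W).image (fun p => (BWT T).getD p 0) = SigmaL T W := by
  ext a
  simp only [bwtInterval, Finset.mem_image, Finset.mem_filter, Finset.mem_range, getD_BWT,
    mem_SigmaL_iff hW]
  constructor
  · rintro ⟨p, ⟨hp, hpre⟩, rfl⟩
    obtain ⟨j, hj, hR⟩ := exists_rot_eq_getD_sortedRotations hp
    exact ⟨j, hj, hR ▸ hpre, by rw [hR]⟩
  · rintro ⟨j, hj, hpre, rfl⟩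
    obtain ⟨p, hp, hR⟩ := List.mem_iff_getElem.mp (mem_sortedRotations.mpr ⟨j, hj, rfl⟩)
    refine ⟨p, ⟨length_sortedRotations ▸ hp, ?_⟩, ?_⟩ <;> rw [List.getD_eq_getElem _ _ hp, hR]
    exact hpre

theorem ordConnected_bwtInterval (hW : W.length ≤ T.length) :
    (bwtInterval T W : Set ℕ).OrdConnected := by
  refine ⟨fun p hp r hr q ⟨hpq, hqr⟩ => ?_⟩
  simp only [bwtInterval, Finset.coe_filter, Finset.mem_range, Set.mem_ofPred_eq] at hp hr ⊢
  have hq : q < T.length := by omega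
  refine ⟨hq, hp.2.of_le_of_le hr.2 (sortedRotations_le hpq hq) (sortedRotations_le hqr hr.1) ?_⟩
  obtain ⟨j, -, hR⟩ := exists_rot_eq_getD_sortedRotations hq
  rw [← hR]
  simp [rot]
  omega

theorem lt_length_of_mem_bwtInterval {p : ℕ} (hp : p ∈ bwtInterval T W) :
    p < T.length :=
  Finset.mem_range.mp (Finset.mem_filter.mp hp).1

theorem numRuns_BWT (hT : T ≠ []) :
    numRuns (BWT T) = #(boundaries ((BWT T).getD · 0) T.length) + 1 := by
  have hlen : (BWT T).length = T.length := by simp [BWT]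
  rw [numRuns_eq_card_boundaries_add_one _ (List.ne_nil_of_length_pos
    (hlen ▸ List.length_pos_of_ne_nil hT)), hlen]

theorem exists_getD_BWT_eq_of_mem {c : ℕ} (hc : c ∈ T) :
    ∃ p < T.length, (BWT T).getD p 0 = c := by
  obtain ⟨p, hp, rfl⟩ := Finset.mem_image.mp
    ((image_bwtInterval (T := T) (W := []) (Nat.zero_le _)).symm ▸ mem_SigmaL_nil.mpr hc)
  exact ⟨p, lt_length_of_mem_bwtInterval hp, rfl⟩

end SortedRotations

section Repeats

variable {T V W : List ℕ}

theorem length_le_of_mem_maxRepeats (hW : W ∈ MaxRepeats T) : W.length ≤ T.length := by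
  obtain ⟨_, -, rfl⟩ := Finset.mem_image.mp (Finset.mem_filter.mp hW).1
  simp [rot]
  omega

theorem leftMaximal_of_mem_maxRepeats (hW : W ∈ MaxRepeats T) : LeftMaximal T W :=
  (Finset.mem_filter.mp hW).2.2.2.1

theorem eq_of_prefix_of_mem_rightmostMaxRepeats (hV : V ∈ RightmostMaxRepeats T)
    (hW : W ∈ RightmostMaxRepeats T) (h : V <+: W) : V = W := by
  obtain ⟨t, rfl⟩ := h
  by_contra hne
  have ht : t ≠ [] := by rintro rfl; exact hne (List.append_nil V).symm
  exact (Finset.mem_filter.mp hV).2 t ht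
    (leftMaximal_of_mem_maxRepeats (Finset.mem_filter.mp hW).1)

theorem pairwiseDisjoint_bwtInterval (T : List ℕ) :
    (RightmostMaxRepeats T : Set (List ℕ)).PairwiseDisjoint (bwtInterval T) := by
  intro V hV W hW hVW
  refine Finset.disjoint_left.mpr fun p hpV hpW => hVW ?_
  rcases List.prefix_or_prefix_of_prefix (Finset.mem_filter.mp hpV).2
      (Finset.mem_filter.mp hpW).2 with h | h
  exacts [eq_of_prefix_of_mem_rightmostMaxRepeats hV hW h,
    (eq_of_prefix_of_mem_rightmostMaxRepeats hW hV h).symm]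

end Repeats

theorem runs_lower_bound_general (σ : ℕ) (T : List ℕ)
    (hall : ∀ c, c ≤ σ → c ∈ T)
    (hne : (RightmostMaxRepeats T).Nonempty) :
    ((Finset.range (σ + 1) \
        (RightmostMaxRepeats T).biUnion (fun W => SigmaL T W)).card : ℤ)
      + ∑ W ∈ RightmostMaxRepeats T, ((SigmaL T W).card : ℤ)
      - ((RightmostMaxRepeats T).card : ℤ) + 1
      ≤ (numRuns (BWT T) : ℤ) := by
  set M := RightmostMaxRepeats T
  set U := range (σ + 1) \ M.biUnion (SigmaL T)
  have hlen : ∀ W ∈ M, W.length ≤ T.length := fun W hW =>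
    length_le_of_mem_maxRepeats (Finset.mem_filter.mp hW).1
  have himage : ∀ W ∈ M, (bwtInterval T W).image ((BWT T).getD · 0) = SigmaL T W :=
    fun W hW => image_bwtInterval (hlen W hW)
  have hIU : ∀ W ∈ M, ∀ p ∈ bwtInterval T W, (BWT T).getD p 0 ∉ U := fun W hW p hp hpU =>
    (Finset.mem_sdiff.mp hpU).2
      (Finset.mem_biUnion.mpr ⟨W, hW, himage W hW ▸ Finset.mem_image_of_mem _ hp⟩)
  have hU : ∀ c ∈ U, ∃ p < T.length, (BWT T).getD p 0 = c := fun c hc =>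
    exists_getD_BWT_eq_of_mem <| hall c <|
      Nat.lt_succ_iff.mp (Finset.mem_range.mp (Finset.mem_sdiff.mp hc).1)
  obtain ⟨W, hW⟩ := hne
  obtain ⟨a, ha⟩ := Finset.card_pos.mp
    (leftMaximal_of_mem_maxRepeats (Finset.mem_filter.mp hW).1).pos
  obtain ⟨q, hq, rfl⟩ := Finset.mem_image.mp ((himage W hW).symm ▸ ha)
  have key := card_add_sum_card_image_le (fun _ _ _ => lt_length_of_mem_bwtInterval)
    (fun W hW => ordConnected_bwtInterval (hlen W hW)) (pairwiseDisjoint_bwtInterval T) hU hIU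
    (lt_length_of_mem_bwtInterval hq) (hIU W hW q hq)
  rw [Finset.sum_congr rfl fun W hW => congrArg Finset.card (himage W hW)] at key
  rw [numRuns_BWT (List.ne_nil_of_length_pos (lt_length_of_mem_bwtInterval hq).pos)]
  zify at key
  push_cast at key ⊢
  omega

/-- If every character of `[0..σ]` occurs in the circular string `T`
and `ℳ^r_T ≠ ∅`, then
`r_T ≥ |[0..σ] \ ⋃_{W ∈ ℳ^r_T} Σ^ℓ_T(W)| + ∑_{W ∈ ℳ^r_T} |Σ^ℓ_T(W)| − |ℳ^r_T| + 1`. -/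
theorem runs_lower_bound (σ : ℕ) (T : List ℕ) (hT : Wellformed σ T)
    (hall : ∀ c, c ≤ σ → c ∈ T)
    (hne : (RightmostMaxRepeats T).Nonempty) :
    ((Finset.range (σ + 1) \
        (RightmostMaxRepeats T).biUnion (fun W => SigmaL T W)).card : ℤ)
      + ∑ W ∈ RightmostMaxRepeats T, ((SigmaL T W).card : ℤ)
      - ((RightmostMaxRepeats T).card : ℤ) + 1
      ≤ (numRuns (BWT T) : ℤ) :=
  runs_lower_bound_general σ T hall hne
end
end

section
/- The number of factors in the LZ77 factorization of T is at most the number of right extensions of maximal repeats of T: z_T ≤ e_T, where e_T is the number of pairs (V, b) with V ∈ M_T ∪ {ε} and b ∈ Σ^r_T(V). -/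
/-! Basic definitions: strings are lists of naturals; the separator `#` is `0`;
the alphabet is `Σ = [1..σ]`. Occurrences are taken in the circular version of `T`. -/

noncomputable section
open Classical

-- ### my auxiliary lemmas ###
namespace LZ

variable {σ : ℕ} {T : List ℕ}

lemma getD_drop (l : List ℕ) (i j : ℕ) : (l.drop i).getD j 0 = l.getD (i+j) 0 := by
  simp [List.getD, List.getElem?_drop]

lemma wf_len (hT : Wellformed σ T) : 1 ≤ T.length := by
  obtain ⟨S, rfl, -⟩ := hT; simp

lemma wf_zero (hT : Wellformed σ T) : T.getD (T.length - 1) 0 = 0 := by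
  obtain ⟨S, rfl, -⟩ := hT
  simp [List.getD_append_right, List.getD]

lemma wf_zpos (hT : Wellformed σ T) {m : ℕ} (hm : m < T.length) (h0 : T.getD m 0 = 0) :
    m = T.length - 1 := by
  obtain ⟨S, rfl, hS⟩ := hT
  by_contra hne
  have hml : m < S.length + 1 := by simpa using hm
  have hmS : m < S.length := by simp at hne ⊢; omega
  rw [List.getD_eq_getElem _ _ (by simpa using hm), List.getElem_append_left hmS] at h0
  have := hS _ (List.getElem_mem hmS)
  omega

lemma getD_mem {m : ℕ} (hm : m < T.length) : T.getD m 0 ∈ T := by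
  rw [List.getD_eq_getElem _ _ hm]; exact List.getElem_mem hm

lemma mem_Pset {W : List ℕ} {i : ℕ} : i ∈ Pset T W ↔ i < T.length ∧ CircOccAt T W i := by
  simp [Pset]

lemma occ_mod {W : List ℕ} {i : ℕ} (h : CircOccAt T W i) : CircOccAt T W (i % T.length) := by
  intro j hj; rw [h j hj, Nat.mod_add_mod]

lemma prefix_getD {A : List ℕ} {q o : ℕ} (hpre : A <+: T.drop q) (ho : o < A.length) :
    q + o < T.length ∧ T.getD (q + o) 0 = A.getD o 0 := by
  obtain ⟨t, ht⟩ := hpre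
  have hlen : A.length + t.length = T.length - q := by
    have := congrArg List.length ht; simpa using this
  have hq : q < T.length := by
    rcases Nat.lt_or_ge q T.length with h | h
    · exact h
    · exfalso; rw [List.drop_eq_nil_of_le h] at ht; simp at ht; omega
  constructor
  · omega
  · rw [← getD_drop, ← ht, List.getD_append _ _ _ _ ho]

lemma lin2circ {W : List ℕ} {q : ℕ} (hpre : W <+: T.drop q) : CircOccAt T W q := by
  intro j hj
  obtain ⟨hlt, heq⟩ := prefix_getD hpre hj
  rw [Nat.mod_eq_of_lt hlt, heq]

lemma circ2lin (hT : Wellformed σ T) {U : List ℕ} {q : ℕ} (h : CircOccAt T U q)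
    (hq : q < T.length) (h0 : ∀ x ∈ U, x ≠ 0) :
    q + U.length ≤ T.length ∧ U <+: T.drop q := by
  have hn := wf_len hT
  have hle : q + U.length ≤ T.length := by
    by_contra hgt
    have ho : T.length - 1 - q < U.length := by omega
    have := h _ ho
    rw [show (q + (T.length - 1 - q)) % T.length = T.length - 1 by
      rw [Nat.mod_eq_of_lt (by omega)]; omega, wf_zero hT] at this
    refine h0 _ ?_ this
    rw [List.getD_eq_getElem _ 0 ho]
    exact List.getElem_mem ho
  constructor
  · exact hle
  · rw [List.prefix_iff_eq_take]
    apply List.ext_getElem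
    · simp; omega
    · intro o ho1 ho2
      have hoU : o < U.length := ho1
      have := h o hoU
      rw [Nat.mod_eq_of_lt (by omega)] at this
      rw [List.getElem_take, List.getElem_drop]
      rw [← List.getD_eq_getElem U 0 hoU, this, List.getD_eq_getElem _ 0 (by omega)]


lemma occ_prefix {A B : List ℕ} {i : ℕ} (h : CircOccAt T (A ++ B) i) : CircOccAt T A i := by
  intro j hj
  have := h j (by simp; omega)
  rwa [List.getD_append _ _ _ _ hj] at this

lemma occ_append_right {A B : List ℕ} {i : ℕ} (h : CircOccAt T (A ++ B) i) :
    CircOccAt T B ((i + A.length) % T.length) := by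
  intro j hj
  have := h (A.length + j) (by simp; omega)
  rw [List.getD_append_right _ _ _ _ (by omega)] at this
  simp only [Nat.add_sub_cancel_left] at this
  rw [this, Nat.mod_add_mod]
  congr 1
  rw [Nat.add_assoc]

lemma occ_snoc {A : List ℕ} {i c : ℕ} (h : CircOccAt T A i)
    (hc : T.getD ((i + A.length) % T.length) 0 = c) : CircOccAt T (A ++ [c]) i := by
  intro j hj
  simp only [List.length_append, List.length_singleton] at hj
  rcases Nat.lt_or_ge j A.length with hlt | hge
  · rw [List.getD_append _ _ _ _ hlt]; exact h j hlt
  · have hj' : j = A.length := by omega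
    subst hj'
    rw [List.getD_append_right _ _ _ _ (le_refl _), Nat.sub_self]
    simpa using hc.symm

lemma occ_cons {A : List ℕ} {i a : ℕ} (hn : 1 ≤ T.length) (h : CircOccAt T A i)
    (ha : T.getD ((i + (T.length - 1)) % T.length) 0 = a) :
    CircOccAt T (a :: A) ((i + (T.length - 1)) % T.length) := by
  intro j hj
  cases j with
  | zero =>
    simpa [Nat.mod_add_mod] using ha.symm
  | succ j =>
    have hjA : j < A.length := by simpa using hj
    have := h j hjA
    simp only [List.getD_cons_succ]
    rw [this, Nat.mod_add_mod]
    congr 1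
    have : i + (T.length - 1) + (j + 1) = (i + j) + T.length := by omega
    rw [this, Nat.add_mod_right]

lemma occ_tail {A : List ℕ} {i a : ℕ} (h : CircOccAt T (a :: A) i) :
    CircOccAt T A ((i + 1) % T.length) := by
  have := occ_append_right (A := [a]) (B := A) (by simpa using h)
  simpa using this

lemma repeat_short (hT : Wellformed σ T) {W : List ℕ} (h2 : 2 ≤ (Pset T W).card) :
    W.length < T.length := by
  have hn := wf_len hT
  obtain ⟨i, hi, i', hi', hne⟩ := Finset.one_lt_card.mp h2
  rw [mem_Pset] at hi hi'
  by_contra hge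
  have hge : T.length ≤ W.length := by omega
  have key : ∀ p : ℕ, p < T.length → CircOccAt T W p → (p + (T.length - 1 - i)) % T.length = T.length - 1 := by
    intro p hp hocc
    have h1 := hi.2 (T.length - 1 - i) (by omega)
    rw [show (i + (T.length - 1 - i)) % T.length = T.length - 1 by
      rw [Nat.mod_eq_of_lt (by omega)]; omega, wf_zero hT] at h1
    have h2' := hocc (T.length - 1 - i) (by omega)
    rw [h1] at h2'
    exact (wf_zpos hT (Nat.mod_lt _ (by omega)) h2'.symm)
  have k1 := key i hi.1 hi.2
  have k2 := key i' hi'.1 hi'.2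
  apply hne
  set o := T.length - 1 - i with ho
  have hv2 : i' + o < 2 * T.length := by omega
  rcases Nat.lt_or_ge (i' + o) T.length with hc | hc
  · rw [Nat.mod_eq_of_lt hc] at k2; omega
  · rw [Nat.mod_eq_sub_mod hc, Nat.mod_eq_of_lt (by omega)] at k2; omega


lemma pset_two {W : List ℕ} {i i' : ℕ} (hi : i ∈ Pset T W) (hi' : i' ∈ Pset T W)
    (hne : i ≠ i') : 2 ≤ (Pset T W).card :=
  Finset.one_lt_card.mpr ⟨i, hi, i', hi', hne⟩

lemma sigmaL_unique (hT : Wellformed σ T) {W : List ℕ} (hl : ¬ LeftMaximal T W)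
    {i : ℕ} (hocc : CircOccAt T W i) {i0 : ℕ} (h0 : CircOccAt T W i0) :
    T.getD ((i + (T.length - 1)) % T.length) 0 = T.getD ((i0 + (T.length - 1)) % T.length) 0 := by
  have hn := wf_len hT
  have hmem : ∀ p : ℕ, CircOccAt T W p → T.getD ((p + (T.length - 1)) % T.length) 0 ∈ SigmaL T W := by
    intro p hp
    rw [SigmaL, Finset.mem_filter, List.mem_toFinset]
    refine ⟨getD_mem (Nat.mod_lt _ (by omega)), ?_⟩
    exact ⟨_, mem_Pset.mpr ⟨Nat.mod_lt _ (by omega), occ_cons hn hp rfl⟩⟩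
  rw [LeftMaximal, not_lt] at hl
  exact Finset.card_le_one.mp hl _ (hmem i hocc) _ (hmem i0 h0)

lemma sat (hT : Wellformed σ T) :
    ∀ m (W : List ℕ), W ≠ [] → T.length ≤ W.length + m → 2 ≤ (Pset T W).card →
      ∃ X α, X = α ++ W ∧ 2 ≤ (Pset T X).card ∧ LeftMaximal T X ∧
        SigmaR T X = SigmaR T W ∧
        ∀ i, CircOccAt T W i →
          CircOccAt T X ((i + W.length + (T.length - X.length)) % T.length) := by
  have hn := wf_len hT
  intro m
  induction m with
  | zero =>
    intro W hne hlen hcard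
    exact absurd (repeat_short hT hcard) (by omega)
  | succ m ih =>
    intro W hne hlen hcard
    have hWlt := repeat_short hT hcard
    by_cases hl : LeftMaximal T W
    · refine ⟨W, [], rfl, hcard, hl, rfl, fun i hi => ?_⟩
      rw [show i + W.length + (T.length - W.length) = i + T.length by omega,
        Nat.add_mod_right]
      exact occ_mod hi
    · obtain ⟨i0, hi0⟩ := Finset.card_pos.mp (by omega : 0 < (Pset T W).card)
      rw [mem_Pset] at hi0
      set a := T.getD ((i0 + (T.length - 1)) % T.length) 0 with ha
      have hstep : ∀ i, CircOccAt T W i → CircOccAt T (a :: W) ((i + (T.length - 1)) % T.length) := by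
        intro i hi
        exact occ_cons hn hi (sigmaL_unique hT hl hi hi0.2)
      have hinj : ∀ p q : ℕ, p < T.length → q < T.length →
          (p + (T.length - 1)) % T.length = (q + (T.length - 1)) % T.length → p = q := by
        intro p q hp hq h
        have h1 : ((p + (T.length - 1)) % T.length + 1) % T.length = p := by
          rw [Nat.mod_add_mod, show p + (T.length - 1) + 1 = p + T.length by omega,
            Nat.add_mod_right, Nat.mod_eq_of_lt hp]
        have h2 : ((q + (T.length - 1)) % T.length + 1) % T.length = q := by
          rw [Nat.mod_add_mod, show q + (T.length - 1) + 1 = q + T.length by omega,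
            Nat.add_mod_right, Nat.mod_eq_of_lt hq]
        rw [← h1, ← h2, h]
      have hcard' : 2 ≤ (Pset T (a :: W)).card := by
        obtain ⟨p, hp, q, hq, hpq⟩ := Finset.one_lt_card.mp hcard
        rw [mem_Pset] at hp hq
        refine pset_two (i := (p + (T.length - 1)) % T.length)
          (i' := (q + (T.length - 1)) % T.length) ?_ ?_ ?_
        · exact mem_Pset.mpr ⟨Nat.mod_lt _ (by omega), hstep p hp.2⟩
        · exact mem_Pset.mpr ⟨Nat.mod_lt _ (by omega), hstep q hq.2⟩
        · intro h; exact hpq (hinj p q hp.1 hq.1 h)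
      have hsr : SigmaR T (a :: W) = SigmaR T W := by
        ext b
        simp only [SigmaR, Finset.mem_filter, List.mem_toFinset, and_congr_right_iff]
        intro hb
        constructor
        · rintro ⟨p, hp⟩
          rw [mem_Pset] at hp
          have : CircOccAt T (W ++ [b]) ((p + 1) % T.length) := by
            have := occ_tail (a := a) (A := W ++ [b]) (by simpa using hp.2)
            exact this
          exact ⟨_, mem_Pset.mpr ⟨Nat.mod_lt _ (by omega), this⟩⟩
        · rintro ⟨p, hp⟩
          rw [mem_Pset] at hp
          have hW : CircOccAt T W p := occ_prefix hp.2
          have : CircOccAt T (a :: (W ++ [b])) ((p + (T.length - 1)) % T.length) :=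
            occ_cons hn hp.2 (sigmaL_unique hT hl hW hi0.2)
          exact ⟨_, mem_Pset.mpr ⟨Nat.mod_lt _ (by omega), by simpa using this⟩⟩
      obtain ⟨X, α, hXeq, hX2, hXl, hXsr, hshift⟩ :=
        ih (a :: W) (by simp) (by simp; omega) hcard'
      refine ⟨X, α ++ [a], by simp [hXeq], hX2, hXl, by rw [hXsr, hsr], ?_⟩
      intro i hi
      have := hshift _ (hstep i hi)
      rw [Nat.add_assoc, Nat.mod_add_mod,
        show i + (T.length - 1) + ((a :: W).length + (T.length - X.length))
          = (i + W.length + (T.length - X.length)) + T.length by simp; omega,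
        Nat.add_mod_right] at this
      exact this


lemma rot_getD {s o : ℕ} (hs : s < T.length) (ho : o < T.length) :
    (rot T s).getD o 0 = T.getD ((s + o) % T.length) 0 := by
  rw [rot]
  rcases Nat.lt_or_ge o (T.length - s) with h | h
  · rw [List.getD_append _ _ _ _ (by simp [List.length_drop]; omega), getD_drop,
      Nat.mod_eq_of_lt (by omega)]
  · rw [List.getD_append_right _ _ _ _ (by simp [List.length_drop]; omega)]
    have : (T.take s).getD (o - (T.drop s).length) 0 = T.getD (o - (T.length - s)) 0 := by
      rw [List.length_drop]
      rcases Nat.lt_or_ge (o - (T.length - s)) s with h2 | h2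
      · rw [List.getD_eq_getElem _ _ (by simp; omega), List.getElem_take,
          List.getD_eq_getElem _ _ (by omega)]
      · rw [List.getD_eq_default _ _ (by simp; omega), List.getD_eq_default _ _ (by omega)]
    rw [this]
    congr 1
    rw [Nat.mod_eq_sub_mod (by omega), Nat.mod_eq_of_lt (by omega)]
    omega

lemma mem_circSubstrings {X : List ℕ} {s : ℕ} (hs : s < T.length)
    (hXn : X.length ≤ T.length) (hocc : CircOccAt T X s) : X ∈ circSubstrings T := by
  rw [circSubstrings, Finset.mem_image]
  refine ⟨(s, X.length), Finset.mem_product.mpr ⟨Finset.mem_range.mpr hs,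
    Finset.mem_range.mpr (by omega)⟩, ?_⟩
  apply List.ext_getElem
  · simp [rot]; omega
  · intro o ho1 ho2
    have hoX : o < X.length := by simp [rot] at ho1; exact ho1.1
    have := hocc o hoX
    rw [List.getD_eq_getElem _ 0 hoX] at this
    rw [List.getElem_take]
    rw [← List.getD_eq_getElem _ 0, rot_getD hs (by omega), ← this]

lemma snoc_prefix_drop {A : List ℕ} {q c : ℕ} (hpre : A <+: T.drop q)
    (hlt : q + A.length < T.length) (hc : T.getD (q + A.length) 0 = c) :
    A ++ [c] <+: T.drop q := by
  rw [List.prefix_iff_eq_take] at hpre ⊢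
  rw [List.length_append, List.length_singleton, List.take_succ, ← hpre]
  congr 1
  rw [List.getElem?_drop, List.getElem?_eq_getElem (by omega)]
  rw [← hc, List.getD_eq_getElem _ 0 (by omega : q + A.length < T.length)]
  simp

lemma flatten_prefix {A B : List (List ℕ)} (h : A <+: B) : A.flatten <+: B.flatten := by
  obtain ⟨t, rfl⟩ := h
  exact ⟨t.flatten, by simp⟩


def kpos (fs : List (List ℕ)) (i : ℕ) : ℕ := ((fs.take i).flatten).length

lemma k_succ {fs : List (List ℕ)} {i : ℕ} (h : i < fs.length) :
    kpos fs (i + 1) = kpos fs i + (fs.getD i []).length := by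
  rw [kpos, List.take_succ, List.flatten_append, List.length_append,
    List.getElem?_eq_getElem h, List.getD_eq_getElem _ _ h]
  simp [kpos]

lemma k_mono {fs : List (List ℕ)} {i i' : ℕ} (h : i ≤ i') : kpos fs i ≤ kpos fs i' := by
  have h1 : fs.take i <+: fs.take i' := by
    rw [show fs.take i = (fs.take i').take i by rw [List.take_take, min_eq_left h]]
    exact List.take_prefix _ _
  exact (flatten_prefix h1).length_le

lemma factor_drop {fs : List (List ℕ)} {i : ℕ} (h : i < fs.length) (hfl : fs.flatten = T) :
    T.drop (kpos fs i) = fs.getD i [] ++ (fs.drop (i + 1)).flatten := by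
  have h2 : T = (fs.take i).flatten ++ (fs.drop i).flatten := by
    rw [← List.flatten_append, List.take_append_drop, hfl]
  rw [h2, kpos, List.drop_left, List.drop_eq_getElem_cons h, List.flatten_cons,
    List.getD_eq_getElem _ _ h]

lemma factor_prefix {fs : List (List ℕ)} {i : ℕ} (h : i < fs.length) (hfl : fs.flatten = T) :
    fs.getD i [] <+: T.drop (kpos fs i) :=
  ⟨_, (factor_drop h hfl).symm⟩

lemma kW_le {fs : List (List ℕ)} {i : ℕ} (h : i < fs.length) (hfl : fs.flatten = T)
    (hne : fs.getD i [] ≠ []) :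
    kpos fs i < T.length ∧ kpos fs i + (fs.getD i []).length ≤ T.length := by
  have := congrArg List.length (factor_drop h hfl)
  rw [List.length_drop, List.length_append] at this
  have hW : 1 ≤ (fs.getD i []).length := by
    cases hx : fs.getD i [] with
    | nil => exact absurd hx hne
    | cons a l => simp [hx]
  omega


def Good (T : List ℕ) (fs : List (List ℕ)) (i : ℕ) (V : List ℕ) (c : ℕ) : Prop :=
  (V = [] ∧ fs.getD i [] = [c] ∧ ∀ j < kpos fs i, ¬ ([c] <+: T.drop j)) ∨
  (V ≠ [] ∧ V.length ≤ T.length ∧ (∃ α, V = α ++ fs.getD i []) ∧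
    (∀ x ∈ fs.getD i [], x ≠ 0) ∧
    kpos fs i + (fs.getD i []).length < T.length ∧
    c = T.getD (kpos fs i + (fs.getD i []).length) 0 ∧
    CircOccAt T (V ++ [c])
      ((kpos fs i + (fs.getD i []).length + (T.length - V.length)) % T.length))

lemma fact (hT : Wellformed σ T) {fs : List (List ℕ)} (hfs : IsLZ77 T fs) {i : ℕ}
    (h : i < fs.length) :
    ∃ V c, V ∈ insert ([] : List ℕ) (MaxRepeats T) ∧ c ∈ SigmaR T V ∧ Good T fs i V c := by
  have hn := wf_len hT
  obtain ⟨hfl, hnil, hgr⟩ := hfs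
  set W := fs.getD i [] with hWdef
  have hWget : fs.get ⟨i, h⟩ = W := (List.getD_eq_getElem fs [] h).symm
  have hWne : W ≠ [] := by
    rw [hWdef, List.getD_eq_getElem _ _ h]; exact hnil _ (List.getElem_mem h)
  have hW1 : 1 ≤ W.length := by
    cases hx : W with
    | nil => exact absurd hx hWne
    | cons a l => simp [hx]
  set K := kpos fs i with hKdef
  have hpre : W <+: T.drop K := factor_prefix h hfl
  obtain ⟨hKlt, hKW⟩ := kW_le h hfl hWne
  by_cases hsrc : ∃ j, j < K ∧ W <+: T.drop j
  · -- case B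
    obtain ⟨j, hj, hjpre⟩ := hsrc
    have h0free : ∀ x ∈ W, x ≠ 0 := by
      intro x hx hx0
      subst hx0
      obtain ⟨o, ho, hgo⟩ := List.getElem_of_mem hx
      have hgo' : W.getD o 0 = 0 := by rw [List.getD_eq_getElem _ _ ho, hgo]
      have h1 := prefix_getD hpre ho
      have h2 := prefix_getD hjpre ho
      have e1 := wf_zpos hT h1.1 (by rw [h1.2, hgo'])
      have e2 := wf_zpos hT h2.1 (by rw [h2.2, hgo'])
      omega
    have hKWlt : K + W.length < T.length := by
      by_contra hge
      have h1 := prefix_getD hpre (show W.length - 1 < W.length by omega)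
      have hz : W.getD (W.length - 1) 0 = 0 := by
        rw [← h1.2, show K + (W.length - 1) = T.length - 1 by omega, wf_zero hT]
      exact h0free _ (by rw [List.getD_eq_getElem _ _ (by omega)]
                         exact List.getElem_mem _) hz
    have hjW : j + W.length < T.length := by
      by_contra hge
      have h1 := prefix_getD hjpre (show W.length - 1 < W.length by omega)
      have hz : W.getD (W.length - 1) 0 = 0 := by
        rw [← h1.2, show j + (W.length - 1) = T.length - 1 by omega, wf_zero hT]
      exact h0free _ (by rw [List.getD_eq_getElem _ _ (by omega)]
                         exact List.getElem_mem _) hz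
    set c := T.getD (K + W.length) 0 with hcdef
    have occWcK : W ++ [c] <+: T.drop K := snoc_prefix_drop hpre hKWlt rfl
    have hcmem : c ∈ SigmaR T W := by
      rw [SigmaR, Finset.mem_filter, List.mem_toFinset]
      exact ⟨getD_mem hKWlt, ⟨K, mem_Pset.mpr ⟨by omega, lin2circ occWcK⟩⟩⟩
    have hrm : RightMaximal T W := by
      by_contra hnrm
      rw [RightMaximal, not_lt] at hnrm
      set c' := T.getD (j + W.length) 0 with hc'def
      have occWc'j : W ++ [c'] <+: T.drop j := snoc_prefix_drop hjpre hjW rfl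
      have hc'mem : c' ∈ SigmaR T W := by
        rw [SigmaR, Finset.mem_filter, List.mem_toFinset]
        exact ⟨getD_mem hjW, ⟨j, mem_Pset.mpr ⟨by omega, lin2circ occWc'j⟩⟩⟩
      have hcc : c = c' := Finset.card_le_one.mp hnrm _ hcmem _ hc'mem
      exact (hgr i h).2 (W ++ [c]) occWcK (by rw [hWget]; simp)
        (Or.inr ⟨j, hj, hcc ▸ occWc'j⟩)
    have hP2 : 2 ≤ (Pset T W).card :=
      pset_two (mem_Pset.mpr ⟨by omega, lin2circ hjpre⟩)
        (mem_Pset.mpr ⟨by omega, lin2circ hpre⟩) (by omega)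
    obtain ⟨X, α, hXeq, hX2, hXl, hXsr, hshift⟩ := sat hT T.length W hWne (by omega) hP2
    have hXlt := repeat_short hT hX2
    have hXne : X ≠ [] := by rw [hXeq]; simp [hWne]
    have hoccXs := hshift K (lin2circ hpre)
    set s := (K + W.length + (T.length - X.length)) % T.length with hsdef
    have hslt : s < T.length := Nat.mod_lt _ (by omega)
    have hsX : (s + X.length) % T.length = K + W.length := by
      rw [hsdef, Nat.mod_add_mod,
        show K + W.length + (T.length - X.length) + X.length = K + W.length + T.length by
          omega,
        Nat.add_mod_right, Nat.mod_eq_of_lt (by omega)]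
    have hoccXc : CircOccAt T (X ++ [c]) s := occ_snoc hoccXs (by rw [hsX])
    have hXmem : X ∈ MaxRepeats T := by
      rw [MaxRepeats, Finset.mem_filter]
      exact ⟨mem_circSubstrings hslt (by omega) hoccXs, hXne, hX2, hXl,
        by rw [RightMaximal, hXsr]; exact hrm⟩
    have hcX : c ∈ SigmaR T X := by
      rw [SigmaR, Finset.mem_filter, List.mem_toFinset]
      exact ⟨getD_mem hKWlt, ⟨s, mem_Pset.mpr ⟨hslt, hoccXc⟩⟩⟩
    exact ⟨X, c, Finset.mem_insert_of_mem hXmem, hcX,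
      Or.inr ⟨hXne, by omega, ⟨α, hXeq⟩, h0free, hKWlt, rfl, hoccXc⟩⟩
  · -- case A
    rcases (hgr i h).1 with hlen1 | hex
    · rw [hWget] at hlen1
      obtain ⟨c, hc⟩ := List.length_eq_one_iff.mp hlen1
      have hpre1 : [c] <+: T.drop K := hc ▸ hpre
      have h1 := prefix_getD hpre1 (show 0 < ([c] : List ℕ).length by simp)
      refine ⟨[], c, by simp, ?_, Or.inl ⟨rfl, hc, ?_⟩⟩
      · rw [SigmaR, Finset.mem_filter, List.mem_toFinset]
        constructor
        · have : c = T.getD (K + 0) 0 := by simpa using h1.2.symm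
          rw [this]; exact getD_mem h1.1
        · exact ⟨K, mem_Pset.mpr ⟨by omega, lin2circ (by simpa using hpre1)⟩⟩
      · intro jj hjj hcon
        exact hsrc ⟨jj, hjj, by rw [hc]; exact hcon⟩
    · rw [hWget] at hex
      exact absurd hex hsrc

lemma inj (hT : Wellformed σ T) {fs : List (List ℕ)} (hfs : IsLZ77 T fs) {i i' : ℕ}
    {V : List ℕ} {c : ℕ} (hii : i < i') (h' : i' < fs.length)
    (g : Good T fs i V c) (g' : Good T fs i' V c) : False := by
  have hn := wf_len hT
  have h : i < fs.length := lt_trans hii h'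
  obtain ⟨hfl, hnil, hgr⟩ := hfs
  have hWne : fs.getD i [] ≠ [] := by
    rw [List.getD_eq_getElem _ _ h]; exact hnil _ (List.getElem_mem h)
  have hW'ne : fs.getD i' [] ≠ [] := by
    rw [List.getD_eq_getElem _ _ h']; exact hnil _ (List.getElem_mem h')
  have hW1 : 1 ≤ (fs.getD i []).length := by
    cases hx : fs.getD i [] with
    | nil => exact absurd hx hWne
    | cons a l => simp [hx]
  have hW'1 : 1 ≤ (fs.getD i' []).length := by
    cases hx : fs.getD i' [] with
    | nil => exact absurd hx hW'ne
    | cons a l => simp [hx]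
  have hki : kpos fs i + (fs.getD i []).length ≤ kpos fs i' := by
    rw [← k_succ h]; exact k_mono hii
  rcases g with gA | gB
  · rcases g' with gA' | gB'
    · obtain ⟨-, hWc, -⟩ := gA
      obtain ⟨-, hWc', hfresh'⟩ := gA'
      refine hfresh' (kpos fs i) ?_ ?_
      · rw [hWc] at hki; simp at hki; omega
      rw [← hWc]
      exact factor_prefix h hfl
    · exact gB'.1 gA.1
  · rcases g' with gA' | gB'
    · exact gB.1 gA'.1
    · obtain ⟨hVne, hVlen, ⟨α, hVα⟩, h0f, hKW, hc, hocc⟩ := gB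
      obtain ⟨-, -, ⟨α', hVα'⟩, h0f', hKW', hc', -⟩ := gB'
      by_cases hc0 : c = 0
      · have e1 : kpos fs i + (fs.getD i []).length = T.length - 1 :=
          wf_zpos hT hKW (by rw [← hc, hc0])
        have e2 : kpos fs i' + (fs.getD i' []).length = T.length - 1 :=
          wf_zpos hT hKW' (by rw [← hc', hc0])
        omega
      · have hVW' : V.length = α'.length + (fs.getD i' []).length := by
          rw [hVα']; simp
        have hocc2 : CircOccAt T (fs.getD i' [] ++ [c])
            ((kpos fs i + (fs.getD i []).length + (T.length - (fs.getD i' []).length))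
              % T.length) := by
          have hsplit : V ++ [c] = α' ++ (fs.getD i' [] ++ [c]) := by
            rw [hVα', List.append_assoc]
          have h2 := occ_append_right (A := α') (B := fs.getD i' [] ++ [c])
            (hsplit ▸ hocc)
          rw [Nat.mod_add_mod,
            show kpos fs i + (fs.getD i []).length + (T.length - V.length) + α'.length
              = kpos fs i + (fs.getD i []).length + (T.length - (fs.getD i' []).length) by
                omega] at h2
          exact h2
        have hzf : ∀ x ∈ fs.getD i' [] ++ [c], x ≠ 0 := by
          intro x hx
          rcases List.mem_append.mp hx with h1 | h1
          · exact h0f' x h1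
          · simp at h1; subst h1; exact hc0
        set Q := (kpos fs i + (fs.getD i []).length + (T.length - (fs.getD i' []).length))
          % T.length with hQdef
        have hQlt : Q < T.length := Nat.mod_lt _ (by omega)
        obtain ⟨hQle, hQpre⟩ := circ2lin hT hocc2 hQlt hzf
        rw [List.length_append, List.length_singleton] at hQle
        have hQk : Q < kpos fs i' := by
          have hWV : (fs.getD i' []).length ≤ V.length := by omega
          rcases Nat.lt_or_ge
            (kpos fs i + (fs.getD i []).length + (T.length - (fs.getD i' []).length))
            T.length with hv | hv
          · exfalso
            have hQv := Nat.mod_eq_of_lt hv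
            rw [hQdef] at *
            omega
          · have hQv : Q = kpos fs i + (fs.getD i []).length - (fs.getD i' []).length := by
              rw [hQdef, Nat.mod_eq_sub_mod hv, Nat.mod_eq_of_lt (by omega)]
              omega
            omega
        have hpre' : fs.getD i' [] ++ [c] <+: T.drop (kpos fs i') :=
          snoc_prefix_drop (factor_prefix h' hfl) hKW' hc'.symm
        have hget' : fs.get ⟨i', h'⟩ = fs.getD i' [] := (List.getD_eq_getElem fs [] h').symm
        exact (hgr i' h').2 (fs.getD i' [] ++ [c]) hpre' (by rw [hget']; simp)
          (Or.inr ⟨Q, hQk, hQpre⟩)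

end LZ

/-- The number of factors in the LZ77 factorization of `T` is at most
the number of right extensions of maximal repeats of `T`: `z_T ≤ e_T`. -/
theorem lz_le_eCount (σ : ℕ) (T : List ℕ) (hT : Wellformed σ T)
    (fs : List (List ℕ)) (hfs : IsLZ77 T fs) :
    fs.length ≤ eCount T := by
  classical
  set E := (insert ([] : List ℕ) (MaxRepeats T)).sigma (fun V => SigmaR T V) with hE
  have hEcard : E.card = eCount T := Finset.card_sigma _ _
  have fact' : ∀ i, i < fs.length →
      ∃ p : (_ : List ℕ) × ℕ, p ∈ E ∧ LZ.Good T fs i p.1 p.2 := by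
    intro i hi
    obtain ⟨V, c, hV, hc, hg⟩ := LZ.fact hT hfs hi
    exact ⟨⟨V, c⟩, Finset.mem_sigma.mpr ⟨hV, hc⟩, hg⟩
  choose! f hfE hfG using fact'
  by_contra hlt
  push_neg at hlt
  have hcard : E.card < (Finset.range fs.length).card := by
    rw [hEcard, Finset.card_range]; omega
  obtain ⟨x, hx, y, hy, hxy, hf⟩ := Finset.exists_ne_map_eq_of_card_lt_of_maps_to hcard
    (fun a ha => hfE a (Finset.mem_range.mp ha))
  rw [Finset.mem_range] at hx hy
  rcases Nat.lt_or_gt_of_ne hxy with hlt' | hlt'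
  · exact LZ.inj hT hfs hlt' hy (hfG x hx) (by rw [hf]; exact hfG y hy)
  · exact LZ.inj hT hfs hlt' hx (hfG y hy) (by rw [← hf]; exact hfG x hx)
end
end

section
/- There exists a constant c > 0 such that for every n, every σ with σ < n−1, and every string T ∈ [1..σ]^{n−1}#, the number of arcs of the CDAWG of T is at least c·log n; that is, e_T ≥ c·log n. -/
/-! Basic definitions: strings are lists of naturals; the separator `#` is `0`;
the alphabet is `Σ = [1..σ]`. Occurrences are taken in the circular version of `T`. -/

noncomputable section
open Classical

/-! Spell every rotation of `T` in the CDAWG of `T`. Whenever the prefix `W` read so far is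
right-maximal, the path leaves the node of its left closure `lc W` (the longest left extension
shared by all occurrences of `W`) along the arc labelled by the next character. Since `#` occurs
once, `lc W` is a maximal repeat, so every such arc is counted by `e_T`, and `|lc W|` strictly
increases along the path; at the other depths the next character is forced. Hence a rotation is
determined by the set of arcs on its path, and the `n` rotations are pairwise distinct, so
`n ≤ 2 ^ e_T`, i.e. `e_T ≥ log₂ n`. -/

section

open Finset

variable {T W : List ℕ}

lemma eq_of_add_mod_eq {p q c n : ℕ} (hp : p < n) (hq : q < n)
    (h : (p + c) % n = (q + c) % n) : p = q :=
  (Nat.ModEq.add_right_cancel' c h).eq_of_lt_of_lt hp hq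

lemma mem_Pset {p : ℕ} : p ∈ Pset T W ↔ p < T.length ∧ CircOccAt T W p := by
  simp [Pset]

lemma getD_mem_toFinset {x : ℕ} (h : x < T.length) : T.getD x 0 ∈ T.toFinset := by
  rw [List.getD_eq_getElem _ _ h, List.mem_toFinset]
  exact List.getElem_mem h

lemma circOccAt_of_prefix {W' : List ℕ} {i : ℕ} (h : CircOccAt T W i) (hW : W' <+: W) :
    CircOccAt T W' i := by
  obtain ⟨s, rfl⟩ := hW
  intro j hj
  have := h j (by simp; omega)
  rwa [List.getD_append _ _ _ _ hj] at this

lemma circOccAt_append {X Y : List ℕ} {i : ℕ} (hX : CircOccAt T X i)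
    (hY : CircOccAt T Y ((i + X.length) % T.length)) : CircOccAt T (X ++ Y) i := by
  intro j hj
  rcases Nat.lt_or_ge j X.length with hjX | hjX
  · rw [List.getD_append _ _ _ _ hjX]
    exact hX j hjX
  · rw [List.getD_append_right _ _ _ _ hjX, hY (j - X.length) (by simp at hj; omega),
      Nat.mod_add_mod]
    congr 2
    omega

lemma Pset_subset_of_prefix {W' : List ℕ} (h : W' <+: W) : Pset T W ⊆ Pset T W' := by
  intro p hp
  rw [mem_Pset] at hp ⊢
  exact ⟨hp.1, circOccAt_of_prefix hp.2 h⟩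

lemma getD_eq_of_mem_Pset_append_singleton {b p : ℕ} (hp : p ∈ Pset T (W ++ [b])) :
    T.getD ((p + W.length) % T.length) 0 = b := by
  simpa using ((mem_Pset.mp hp).2 W.length (by simp)).symm

lemma one_lt_card_Pset_of_rightMaximal (h : RightMaximal T W) : 1 < (Pset T W).card := by
  obtain ⟨b₁, hb₁, b₂, hb₂, hne⟩ := one_lt_card.mp h
  obtain ⟨p₁, hp₁⟩ := (mem_filter.mp hb₁).2
  obtain ⟨p₂, hp₂⟩ := (mem_filter.mp hb₂).2
  refine one_lt_card.mpr ⟨p₁, Pset_subset_of_prefix (List.prefix_append _ _) hp₁,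
    p₂, Pset_subset_of_prefix (List.prefix_append _ _) hp₂, fun hp => hne ?_⟩
  rw [← getD_eq_of_mem_Pset_append_singleton hp₁, hp,
    getD_eq_of_mem_Pset_append_singleton hp₂]

lemma getD_rotate {i j : ℕ} (hj : j < T.length) :
    (T.rotate i).getD j 0 = T.getD ((i + j) % T.length) 0 := by
  rw [List.getD_eq_getElem _ _ (by simpa using hj), List.getElem_rotate,
    List.getD_eq_getElem _ _ (Nat.mod_lt _ (by omega)), add_comm]

lemma circOccAt_take_rotate (i t : ℕ) : CircOccAt T ((T.rotate i).take t) i := by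
  intro j hj
  have hjn : j < T.length := by simp at hj; omega
  rw [List.getD_eq_getElem _ _ hj, List.getElem_take, ← List.getD_eq_getElem _ 0,
    getD_rotate hjn]

lemma mem_Pset_take_rotate {i : ℕ} (hi : i < T.length) (t : ℕ) :
    i ∈ Pset T ((T.rotate i).take t) :=
  mem_Pset.mpr ⟨hi, circOccAt_take_rotate i t⟩

lemma take_rotate_eq_of_mem_Pset {q : ℕ} (hq : q ∈ Pset T W) (hW : W.length ≤ T.length) :
    (T.rotate q).take W.length = W := by
  refine List.ext_getElem (by simpa using hW) fun j hj hjW => ?_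
  rw [List.getElem_take, ← List.getD_eq_getElem _ 0, getD_rotate (by omega),
    ← (mem_Pset.mp hq).2 j hjW, List.getD_eq_getElem]

lemma mem_circSubstrings_of_mem_Pset {q : ℕ} (hq : q ∈ Pset T W) (hW : W.length ≤ T.length) :
    W ∈ circSubstrings T := by
  refine mem_image.mpr ⟨(q, W.length), ?_, ?_⟩
  · simpa [mem_Pset.mp hq] using Nat.lt_succ_of_le hW
  · rw [rot, ← List.rotate_eq_drop_append_take (mem_Pset.mp hq).1.le]
    exact take_rotate_eq_of_mem_Pset hq hW

lemma take_rotate_succ {i t : ℕ} (ht : t < T.length) :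
    (T.rotate i).take (t + 1) = (T.rotate i).take t ++ [(T.rotate i).getD t 0] := by
  rw [List.take_add_one, List.getElem?_eq_getElem (by simpa using ht),
    List.getD_eq_getElem _ _ (by simpa using ht), Option.toList_some]

lemma getD_rotate_mem_SigmaR {i t : ℕ} (hi : i < T.length) (ht : t < T.length) :
    (T.rotate i).getD t 0 ∈ SigmaR T ((T.rotate i).take t) := by
  refine mem_filter.mpr ⟨?_, i, ?_⟩
  · rw [getD_rotate ht]
    exact getD_mem_toFinset (Nat.mod_lt _ (by omega))
  · rw [← take_rotate_succ ht]
    exact mem_Pset_take_rotate hi _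

/-- The `k` characters circularly preceding position `p` (for `k ≤ |T|`). -/
def leftContext (T : List ℕ) (p k : ℕ) : List ℕ :=
  (List.range k).map fun j => T.getD ((p + (T.length - k) + j) % T.length) 0

@[simp]
lemma length_leftContext (p k : ℕ) : (leftContext T p k).length = k := by
  simp [leftContext]

lemma leftContext_succ {p k : ℕ} (hk : k < T.length) :
    leftContext T p (k + 1) =
      T.getD ((p + (T.length - (k + 1))) % T.length) 0 :: leftContext T p k := by
  simp only [leftContext, List.range_succ_eq_map, List.map_cons, List.map_map, add_zero]
  congr 1
  refine List.map_congr_left fun j _ => ?_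
  simp only [Function.comp_apply]
  congr 2
  omega

lemma mem_Pset_leftContext_append {p k : ℕ} (hp : p ∈ Pset T W) (hk : k ≤ T.length) :
    (p + (T.length - k)) % T.length ∈ Pset T (leftContext T p k ++ W) := by
  obtain ⟨hpn, hW⟩ := mem_Pset.mp hp
  refine mem_Pset.mpr ⟨Nat.mod_lt _ (by omega), circOccAt_append (fun j hj => ?_) ?_⟩
  · rw [length_leftContext] at hj
    simp [leftContext, hj, Nat.mod_add_mod]
  · rwa [length_leftContext, Nat.mod_add_mod, show p + (T.length - k) + k = p + T.length by omega,
      Nat.add_mod_right, Nat.mod_eq_of_lt hpn]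

def ForcedLeftContext (T W : List ℕ) (k : ℕ) : Prop :=
  ∀ p ∈ Pset T W, ∀ q ∈ Pset T W, leftContext T p k = leftContext T q k

lemma ForcedLeftContext.mono {W' : List ℕ} {k : ℕ} (h : ForcedLeftContext T W k)
    (hsub : Pset T W' ⊆ Pset T W) : ForcedLeftContext T W' k :=
  fun p hp q hq => h p (hsub hp) q (hsub hq)

def forcedLeftLength (T W : List ℕ) : ℕ :=
  Nat.findGreatest (ForcedLeftContext T W) T.length

lemma forcedLeftContext_forcedLeftLength : ForcedLeftContext T W (forcedLeftLength T W) :=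
  Nat.findGreatest_spec (Nat.zero_le _) fun p _ q _ => by simp [leftContext]

lemma forcedLeftLength_le : forcedLeftLength T W ≤ T.length :=
  Nat.findGreatest_le _

lemma forcedLeftLength_le_of_subset {W' : List ℕ} (hsub : Pset T W' ⊆ Pset T W) :
    forcedLeftLength T W ≤ forcedLeftLength T W' :=
  Nat.le_findGreatest forcedLeftLength_le (forcedLeftContext_forcedLeftLength.mono hsub)

def leftClosure (T W : List ℕ) : List ℕ :=
  if h : (Pset T W).Nonempty then
    leftContext T ((Pset T W).min' h) (forcedLeftLength T W) ++ W
  else W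

lemma leftClosure_eq {p : ℕ} (hp : p ∈ Pset T W) :
    leftClosure T W = leftContext T p (forcedLeftLength T W) ++ W := by
  rw [leftClosure, dif_pos ⟨p, hp⟩,
    forcedLeftContext_forcedLeftLength _ ((Pset T W).min'_mem ⟨p, hp⟩) p hp]

lemma length_leftClosure {p : ℕ} (hp : p ∈ Pset T W) :
    (leftClosure T W).length = forcedLeftLength T W + W.length := by
  simp [leftClosure_eq hp]

lemma mem_Pset_leftClosure {p : ℕ} (hp : p ∈ Pset T W) :
    (p + (T.length - forcedLeftLength T W)) % T.length ∈ Pset T (leftClosure T W) :=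
  leftClosure_eq hp ▸ mem_Pset_leftContext_append hp forcedLeftLength_le

lemma SigmaR_subset_leftClosure : SigmaR T W ⊆ SigmaR T (leftClosure T W) := by
  intro b hb
  obtain ⟨hbT, r, hr⟩ := mem_filter.mp hb
  refine mem_filter.mpr ⟨hbT, (r + (T.length - forcedLeftLength T W)) % T.length, ?_⟩
  rw [leftClosure_eq (Pset_subset_of_prefix (List.prefix_append _ _) hr), List.append_assoc]
  exact mem_Pset_leftContext_append hr forcedLeftLength_le

def IsTerminated (T : List ℕ) : Prop :=
  ∀ x < T.length, T.getD x 0 = T.getD (T.length - 1) 0 → x = T.length - 1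

lemma isTerminated_of_wellformed {σ : ℕ} (h : Wellformed σ T) : IsTerminated T := by
  obtain ⟨S, rfl, hS⟩ := h
  intro x hx hlast
  by_contra hne
  have hxS : x < S.length := by simp at hx hne; omega
  have hpos := (hS _ (List.getElem_mem hxS)).1
  have hlast0 : (S ++ [0]).getD ((S ++ [0]).length - 1) 0 = 0 := by simp
  rw [hlast0, List.getD_append _ _ _ _ hxS, List.getD_eq_getElem _ _ hxS] at hlast
  omega

lemma IsTerminated.eq_of_circOccAt (hT : IsTerminated T) {p q : ℕ} (hp : p < T.length)
    (hq : q < T.length) (hW : T.length - 1 ≤ W.length) (hWp : CircOccAt T W p)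
    (hWq : CircOccAt T W q) : p = q := by
  -- An occurrence at `a > 0` covers the unique last character at offset `|T| - 1 - a`.
  have key : ∀ {a b : ℕ}, a < T.length → b < T.length → 0 < a →
      CircOccAt T W a → CircOccAt T W b → a = b := by
    intro a b ha hb ha0 hWa hWb
    have hj : T.length - 1 - a < W.length := by omega
    have hlast : (a + (T.length - 1 - a)) % T.length = T.length - 1 :=
      Nat.mod_eq_of_lt (by omega) |>.trans (by omega)
    have hb' := hT _ (Nat.mod_lt _ (by omega))
      ((hWb _ hj).symm.trans ((hWa _ hj).trans (by rw [hlast])))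
    exact (eq_of_add_mod_eq hb ha (hb'.trans hlast.symm)).symm
  rcases Nat.eq_zero_or_pos p with rfl | hp0
  · rcases Nat.eq_zero_or_pos q with rfl | hq0
    · rfl
    · exact (key hq hp hq0 hWq hWp).symm
  · exact key hp hq hp0 hWp hWq

lemma IsTerminated.rotate_injOn (hT : IsTerminated T) :
    Set.InjOn T.rotate (Set.Iio T.length) := by
  intro i hi i' hi' h
  have hocc : ∀ j, CircOccAt T (T.rotate j) j := fun j => by
    simpa [List.take_of_length_le] using circOccAt_take_rotate (T := T) j T.length
  exact hT.eq_of_circOccAt hi hi' (by simp) (hocc i) (h ▸ hocc i')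

lemma IsTerminated.forcedLeftLength_add_length_add_two_le (hT : IsTerminated T)
    (hW : 1 < (Pset T W).card) : forcedLeftLength T W + W.length + 2 ≤ T.length := by
  obtain ⟨p, hp, q, hq, hpq⟩ := one_lt_card.mp hW
  have hp' := mem_Pset.mp (mem_Pset_leftClosure hp)
  have hq' := mem_Pset.mp (mem_Pset_leftClosure hq)
  by_contra! hlong
  exact hpq (eq_of_add_mod_eq (mem_Pset.mp hp).1 (mem_Pset.mp hq).1 <|
    hT.eq_of_circOccAt hp'.1 hq'.1 (by rw [length_leftClosure hp]; omega) hp'.2 hq'.2)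

lemma IsTerminated.leftMaximal_leftClosure (hT : IsTerminated T)
    (hW : 1 < (Pset T W).card) : LeftMaximal T (leftClosure T W) := by
  set k := forcedLeftLength T W
  have hk : k + 1 ≤ T.length := by
    have := hT.forcedLeftLength_add_length_add_two_le hW
    omega
  have hmem : ∀ r ∈ Pset T W,
      T.getD ((r + (T.length - (k + 1))) % T.length) 0 ∈ SigmaL T (leftClosure T W) := by
    intro r hr
    refine mem_filter.mpr ⟨getD_mem_toFinset (Nat.mod_lt _ (by omega)),
      (r + (T.length - (k + 1))) % T.length, ?_⟩
    rw [leftClosure_eq hr, ← List.cons_append, ← leftContext_succ hk]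
    exact mem_Pset_leftContext_append hr hk
  obtain ⟨p, hp, q, hq, hpq⟩ : ∃ p ∈ Pset T W, ∃ q ∈ Pset T W,
      leftContext T p (k + 1) ≠ leftContext T q (k + 1) := by
    simpa [ForcedLeftContext] using Nat.findGreatest_is_greatest (lt_add_one k) hk
  rw [leftContext_succ hk, leftContext_succ hk,
    forcedLeftContext_forcedLeftLength p hp q hq] at hpq
  exact one_lt_card.mpr ⟨_, hmem p hp, _, hmem q hq, fun h => hpq (by rw [h])⟩

lemma IsTerminated.leftClosure_mem_MaxRepeats (hT : IsTerminated T) (hW : W ≠ [])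
    (hrm : RightMaximal T W) : leftClosure T W ∈ MaxRepeats T := by
  have hcard := one_lt_card_Pset_of_rightMaximal hrm
  obtain ⟨p, hp, q, hq, hpq⟩ := one_lt_card.mp hcard
  have hlen := hT.forcedLeftLength_add_length_add_two_le hcard
  refine mem_filter.mpr ⟨mem_circSubstrings_of_mem_Pset (mem_Pset_leftClosure hp)
    (by rw [length_leftClosure hp]; omega), ?_, ?_, hT.leftMaximal_leftClosure hcard, ?_⟩
  · rw [← List.length_pos_iff, length_leftClosure hp]
    have := List.length_pos_iff.mpr hW
    omega
  · exact one_lt_card.mpr ⟨_, mem_Pset_leftClosure hp, _, mem_Pset_leftClosure hq,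
      fun h => hpq (eq_of_add_mod_eq (mem_Pset.mp hp).1 (mem_Pset.mp hq).1 h)⟩
  · exact hrm.trans_le (card_le_card SigmaR_subset_leftClosure)

def arcs (T : List ℕ) : Finset ((_ : List ℕ) × ℕ) :=
  (insert [] (MaxRepeats T)).sigma (SigmaR T)

lemma card_arcs : (arcs T).card = eCount T :=
  card_sigma _ _

/-- The CDAWG node from which the path spelling a right-maximal `W` leaves
(the root if `W = ε`). -/
def arcSource (T W : List ℕ) : List ℕ :=
  if W = [] then [] else leftClosure T W

/-- The arcs on the CDAWG path spelling the rotation of `T` starting at position `i`. -/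
def pathArcs (T : List ℕ) (i : ℕ) : Finset ((_ : List ℕ) × ℕ) :=
  ((range T.length).filter fun t => RightMaximal T ((T.rotate i).take t)).image
    fun t => ⟨arcSource T ((T.rotate i).take t), (T.rotate i).getD t 0⟩

lemma strictMonoOn_length_arcSource {i : ℕ} (hi : i < T.length) :
    StrictMonoOn (fun t => (arcSource T ((T.rotate i).take t)).length) (Set.Iic T.length) := by
  have hlen : ∀ t, 0 < t → t ≤ T.length → (arcSource T ((T.rotate i).take t)).length =
      forcedLeftLength T ((T.rotate i).take t) + t := by
    intro t ht htn
    rw [arcSource, if_neg (List.ne_nil_of_length_pos (by simp; omega)),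
      length_leftClosure (mem_Pset_take_rotate hi t)]
    simp [htn]
  intro s hs t ht hst
  simp only [Set.mem_Iic] at hs ht
  dsimp only
  rw [hlen t (by omega) ht]
  rcases Nat.eq_zero_or_pos s with rfl | hs0
  · rw [List.take_zero, arcSource, if_pos rfl, List.length_nil]
    omega
  · rw [hlen s hs0 hs]
    have := forcedLeftLength_le_of_subset (T := T)
      (Pset_subset_of_prefix (List.take_prefix_take_left (l := T.rotate i) hst.le))
    omega

lemma IsTerminated.pathArcs_subset_arcs (hT : IsTerminated T) {i : ℕ} (hi : i < T.length) :
    pathArcs T i ⊆ arcs T := by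
  intro a ha
  obtain ⟨t, ht, rfl⟩ := mem_image.mp ha
  obtain ⟨htn, hrm⟩ := mem_filter.mp ht
  have hc := getD_rotate_mem_SigmaR hi (mem_range.mp htn)
  refine mem_sigma.mpr ?_
  by_cases hW : (T.rotate i).take t = []
  · simp only [arcSource, if_pos hW]
    exact ⟨mem_insert_self _ _, hW ▸ hc⟩
  · simp only [arcSource, if_neg hW]
    exact ⟨mem_insert_of_mem (hT.leftClosure_mem_MaxRepeats hW hrm),
      SigmaR_subset_leftClosure hc⟩

lemma getD_rotate_eq_of_pathArcs_eq {i i' u : ℕ} (hi : i < T.length) (hi' : i' < T.length)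
    (h : pathArcs T i = pathArcs T i') (hu : u < T.length)
    (hpre : (T.rotate i).take u = (T.rotate i').take u) :
    (T.rotate i).getD u 0 = (T.rotate i').getD u 0 := by
  by_cases hrm : RightMaximal T ((T.rotate i).take u)
  · have harc : (⟨arcSource T ((T.rotate i').take u), (T.rotate i').getD u 0⟩ :
        (_ : List ℕ) × ℕ) ∈ pathArcs T i := by
      rw [h]
      exact mem_image_of_mem _ (mem_filter.mpr ⟨mem_range.mpr hu, hpre ▸ hrm⟩)
    obtain ⟨s, hs, hsu⟩ := mem_image.mp harc
    obtain ⟨hsrc, hc⟩ := Sigma.mk.inj_iff.mp hsu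
    have hsn : s ≤ T.length := (mem_range.mp (mem_filter.mp hs).1).le
    obtain rfl : s = u := (strictMonoOn_length_arcSource hi).injOn hsn hu.le
      (congrArg List.length (hsrc.trans (hpre ▸ rfl)))
    exact eq_of_heq hc
  · exact card_le_one.mp (by rw [RightMaximal] at hrm; omega) _ (getD_rotate_mem_SigmaR hi hu)
      _ (hpre ▸ getD_rotate_mem_SigmaR hi' hu)

lemma IsTerminated.pathArcs_injOn (hT : IsTerminated T) :
    Set.InjOn (pathArcs T) (Set.Iio T.length) := by
  intro i hi i' hi' h
  have hpre : ∀ t ≤ T.length, (T.rotate i).take t = (T.rotate i').take t := by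
    intro t ht
    induction t with
    | zero => simp
    | succ u ih =>
      rw [take_rotate_succ ht, take_rotate_succ ht, ih (by omega),
        getD_rotate_eq_of_pathArcs_eq hi hi' h ht (ih (by omega))]
  refine hT.rotate_injOn hi hi' ?_
  simpa [List.take_of_length_le] using hpre T.length le_rfl

theorem IsTerminated.length_le_two_pow_eCount (hT : IsTerminated T) :
    T.length ≤ 2 ^ eCount T :=
  calc T.length = (range T.length).card := (card_range _).symm
    _ ≤ (arcs T).powerset.card := card_le_card_of_injOn (pathArcs T)
        (fun i hi => mem_powerset.mpr (hT.pathArcs_subset_arcs (mem_range.mp hi)))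
        (by simpa using hT.pathArcs_injOn)
    _ = 2 ^ eCount T := by rw [card_powerset, card_arcs]

end

/-- There is a constant `c > 0` such that for every `n`, every
`σ < n − 1` and every string `T ∈ [1..σ]^{n−1}#`, the number of arcs of the CDAWG of
`T` is at least `c · log n`: `e_T ≥ c · log n`. -/
theorem eCount_lower_bound :
    ∃ c : ℝ, 0 < c ∧
      ∀ (σ : ℕ) (T : List ℕ), Wellformed σ T → σ + 1 < T.length →
        c * Real.log (T.length : ℝ) ≤ (eCount T : ℝ) := by
  refine ⟨(Real.log 2)⁻¹, by positivity, fun σ T hT hσ => ?_⟩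
  have hn : (0 : ℝ) < T.length := by exact_mod_cast (by omega : 0 < T.length)
  have hcount : (T.length : ℝ) ≤ 2 ^ eCount T := by
    exact_mod_cast (isTerminated_of_wellformed hT).length_le_two_pow_eCount
  have hlog : Real.log T.length ≤ eCount T * Real.log 2 := by
    rw [← Real.log_pow]
    exact Real.log_le_log hn hcount
  rw [inv_mul_le_iff₀ (Real.log_pos one_lt_two)]
  linarith
end
end

section
/- If V is a right-maximal substring of T and there exists a character b ∈ [0..σ] such that bV occurs in circular T and |Σ^r_T(bV)| = 1 (i.e., b labels an implicit Weiner link), then V is left-maximal in T; in particular, V is then a maximal repeat of T. -/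
/-! Basic definitions: strings are lists of naturals; the separator `#` is `0`;
the alphabet is `Σ = [1..σ]`. Occurrences are taken in the circular version of `T`. -/

noncomputable section
open Classical

lemma circOcc_of_append (T W : List ℕ) (c i : ℕ) (h : CircOccAt T (W ++ [c]) i) :
    CircOccAt T W i := by
  intro j hj
  have := h j (by simp; omega)
  rwa [List.getD_append _ _ _ _ hj] at this

lemma circOcc_last (T W : List ℕ) (c i : ℕ) (h : CircOccAt T (W ++ [c]) i) :
    c = T.getD ((i + W.length) % T.length) 0 := by
  have := h W.length (by simp)
  rwa [show (W ++ [c]).getD W.length 0 = c by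
    simp [List.getD_eq_getElem?_getD, List.getElem?_append_right (le_refl W.length)]] at this

lemma circOcc_cons (T W : List ℕ) (i : ℕ) (hn : 0 < T.length) (h : CircOccAt T W i) :
    CircOccAt T (T.getD ((i + T.length - 1) % T.length) 0 :: W)
      ((i + T.length - 1) % T.length) := by
  set i' := (i + T.length - 1) % T.length with hi'
  intro j hj
  match j with
  | 0 =>
    simp only [List.getD_cons_zero, Nat.add_zero]
    rw [hi', Nat.mod_eq_of_lt (Nat.mod_lt _ hn)]
  | k + 1 =>
    simp only [List.getD_cons_succ]
    have hk : k < W.length := by simpa using hj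
    have := h k hk
    rw [this]
    congr 1
    rw [hi', Nat.mod_add_mod]
    have : i + T.length - 1 + (k + 1) = (i + k) + T.length := by omega
    rw [this, Nat.add_mod_right]

lemma getD_mem (T : List ℕ) (i : ℕ) (hi : i < T.length) : T.getD i 0 ∈ T := by
  rw [List.getD_eq_getElem T 0 hi]
  exact List.getElem_mem hi

/-- If `V` is a right-maximal substring of `T` and some character
`b ∈ [0..σ]` is such that `bV` occurs in circular `T` with `|Σ^r_T(bV)| = 1` (i.e. `b`
labels an implicit Weiner link), then `V` is left-maximal; in particular `V` is a
repeat that is both left-maximal and right-maximal, i.e. a maximal repeat of `T`. -/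
theorem implicit_weiner_link_maximal (σ : ℕ) (T : List ℕ) (hT : Wellformed σ T)
    (V : List ℕ) (hV : RightMaximal T V) (b : ℕ) (hb : b ≤ σ)
    (hocc : OccursCirc T (b :: V)) (h1 : (SigmaR T (b :: V)).card = 1) :
    LeftMaximal T V ∧
      (1 < (Pset T V).card ∧ LeftMaximal T V ∧ RightMaximal T V) := by
  obtain ⟨S, hTS, -⟩ := hT
  have hn : 0 < T.length := by subst hTS; simp
  obtain ⟨e0, he0⟩ := Finset.card_eq_one.mp h1
  obtain ⟨c, hc, d0, hd0, hcd⟩ := Finset.one_lt_card.mp hV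
  -- b is a character of T and b ∈ Σ^ℓ(V)
  obtain ⟨i, hi⟩ := id hocc
  rw [Pset, Finset.mem_filter, Finset.mem_range] at hi
  obtain ⟨hin, hiOcc⟩ := hi
  have hbT : b ∈ T := by
    have := hiOcc 0 (by simp)
    simp only [List.getD_cons_zero, Nat.add_zero, Nat.mod_eq_of_lt hin] at this
    rw [this]; exact getD_mem T i hin
  have hbL : b ∈ SigmaL T V := by
    rw [SigmaL, Finset.mem_filter]
    exact ⟨List.mem_toFinset.mpr hbT, hocc⟩
  -- pick d ∈ Σ^r(V) with d ≠ e0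
  obtain ⟨d, hd, hde⟩ : ∃ d ∈ SigmaR T V, d ≠ e0 := by
    by_cases h : c = e0
    · exact ⟨d0, hd0, by rw [← h]; exact fun e => hcd e.symm⟩
    · exact ⟨c, hc, h⟩
  rw [SigmaR, Finset.mem_filter] at hd
  obtain ⟨hdT, hdOcc⟩ := hd
  obtain ⟨j, hj⟩ := hdOcc
  rw [Pset, Finset.mem_filter, Finset.mem_range] at hj
  obtain ⟨hjn, hjOcc⟩ := hj
  set a := T.getD ((j + T.length - 1) % T.length) 0 with ha
  set j' := (j + T.length - 1) % T.length with hj'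
  have haOcc : CircOccAt T (a :: (V ++ [d])) j' := circOcc_cons T _ j hn hjOcc
  have hj'n : j' < T.length := Nat.mod_lt _ hn
  have hab : a ≠ b := by
    intro e
    have hmem : d ∈ SigmaR T (b :: V) := by
      rw [SigmaR, Finset.mem_filter]
      refine ⟨hdT, ⟨j', ?_⟩⟩
      rw [Pset, Finset.mem_filter, Finset.mem_range]
      refine ⟨hj'n, ?_⟩
      rw [e] at haOcc
      simpa using haOcc
    rw [he0, Finset.mem_singleton] at hmem
    exact hde hmem
  have haL : a ∈ SigmaL T V := by
    rw [SigmaL, Finset.mem_filter]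
    refine ⟨List.mem_toFinset.mpr (getD_mem T j' hj'n), ⟨j', ?_⟩⟩
    rw [Pset, Finset.mem_filter, Finset.mem_range]
    refine ⟨hj'n, ?_⟩
    have : CircOccAt T ((a :: V) ++ [d]) j' := by simpa using haOcc
    exact circOcc_of_append T (a :: V) d j' this
  have hLM : LeftMaximal T V := Finset.one_lt_card.mpr ⟨a, haL, b, hbL, hab⟩
  -- |Pset T V| > 1
  rw [SigmaR, Finset.mem_filter] at hc hd0
  obtain ⟨p, hp⟩ := hc.2
  obtain ⟨q, hq⟩ := hd0.2
  rw [Pset, Finset.mem_filter, Finset.mem_range] at hp hq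
  have hpq : p ≠ q := by
    intro e
    have h1 := circOcc_last T V c p hp.2
    have h2 := circOcc_last T V d0 q hq.2
    rw [e] at h1
    exact hcd (h1.trans h2.symm)
  have hPcard : 1 < (Pset T V).card := by
    refine Finset.one_lt_card.mpr ⟨p, ?_, q, ?_, hpq⟩
    · rw [Pset, Finset.mem_filter, Finset.mem_range]
      exact ⟨hp.1, circOcc_of_append T V c p hp.2⟩
    · rw [Pset, Finset.mem_filter, Finset.mem_range]
      exact ⟨hq.1, circOcc_of_append T V d0 q hq.2⟩
  exact ⟨hLM, hPcard, hLM, hV⟩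
end
end

section
/- Let A be a string occurring in circular T with Σ^ℓ_T(A) = {c} for a single character c ∈ [0..σ]. Then for every string Z such that AZ occurs in circular T, Σ^r_T(cAZ) = Σ^r_T(AZ); in particular, AZ is right-maximal in T if and only if cAZ is right-maximal in T. -/
/-! Basic definitions: strings are lists of naturals; the separator `#` is `0`;
the alphabet is `Σ = [1..σ]`. Occurrences are taken in the circular version of `T`. -/

noncomputable section
open Classical

lemma circOccAt_mod {T : List ℕ} (hn : 0 < T.length) (W : List ℕ) (i : ℕ) :
    CircOccAt T W (i % T.length) ↔ CircOccAt T W i := by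
  unfold CircOccAt
  have key : ∀ j, (i % T.length + j) % T.length = (i + j) % T.length :=
    fun j => Nat.mod_add_mod i T.length j
  constructor <;> intro h j hj <;> have h' := h j hj
  · rwa [key] at h'
  · rwa [key]

lemma circOccAt_cons {T : List ℕ} {a : ℕ} {W : List ℕ} {i : ℕ} :
    CircOccAt T (a :: W) i ↔
      a = T.getD (i % T.length) 0 ∧ CircOccAt T W (i + 1) := by
  constructor
  · intro h
    refine ⟨by simpa using h 0 (by simp), fun j hj => ?_⟩
    have := h (j + 1) (by simpa using Nat.succ_lt_succ hj)
    have e : i + (j + 1) = i + 1 + j := by omega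
    rw [e] at this
    simpa using this
  · rintro ⟨h0, h1⟩ j hj
    cases j with
    | zero => simpa using h0
    | succ k =>
        have := h1 k (by simpa using Nat.lt_of_succ_lt_succ hj)
        have e : i + 1 + k = i + (k + 1) := by omega
        rw [e] at this
        simpa using this

lemma circOccAt_prefix {T W V : List ℕ} {i : ℕ} (hWV : W <+: V)
    (h : CircOccAt T V i) : CircOccAt T W i := by
  obtain ⟨R, rfl⟩ := hWV
  intro j hj
  have := h j (by simpa using Nat.lt_of_lt_of_le hj (Nat.le_add_right _ _))
  rwa [List.getD_append _ _ _ _ hj] at this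

lemma occursCirc_iff {T W : List ℕ} (hn : 0 < T.length) :
    OccursCirc T W ↔ ∃ i, CircOccAt T W i := by
  constructor
  · rintro ⟨i, hi⟩
    simp only [Pset, Finset.mem_filter, Finset.mem_range] at hi
    exact ⟨i, hi.2⟩
  · rintro ⟨i, hi⟩
    refine ⟨i % T.length, ?_⟩
    simp only [Pset, Finset.mem_filter, Finset.mem_range]
    exact ⟨Nat.mod_lt _ hn, (circOccAt_mod hn W i).2 hi⟩

lemma occ_cons_iff {T A : List ℕ} {c : ℕ} (hn : 0 < T.length)
    (hc : SigmaL T A = {c}) (Z' : List ℕ) :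
    OccursCirc T (A ++ Z') ↔ OccursCirc T (c :: (A ++ Z')) := by
  set n := T.length with hndef
  rw [occursCirc_iff hn, occursCirc_iff hn]
  constructor
  · rintro ⟨i, hi⟩
    set p := i + n - 1 with hp
    have hp1 : p + 1 = i + n := by omega
    set a := T.getD (p % n) 0 with ha
    have hOccShift : ∀ V : List ℕ, CircOccAt T V i → CircOccAt T V (p + 1) := by
      intro V hV
      rw [← circOccAt_mod hn V (p + 1), hp1]
      have : (i + n) % n = i % n := Nat.add_mod_right i n
      rw [this, circOccAt_mod hn]
      exact hV
    have haA : CircOccAt T (a :: A) p :=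
      circOccAt_cons.2 ⟨rfl, hOccShift A (circOccAt_prefix ⟨Z', rfl⟩ hi)⟩
    have haMem : a ∈ T.toFinset := by
      have hlt : p % n < T.length := Nat.mod_lt _ hn
      rw [ha, List.getD_eq_getElem T 0 hlt]
      exact List.mem_toFinset.2 (List.getElem_mem hlt)
    have haSig : a ∈ SigmaL T A := by
      refine Finset.mem_filter.2 ⟨haMem, ?_⟩
      rw [occursCirc_iff hn]
      exact ⟨p, haA⟩
    have hac : a = c := by rwa [hc, Finset.mem_singleton] at haSig
    refine ⟨p, circOccAt_cons.2 ⟨hac ▸ rfl, hOccShift _ hi⟩⟩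
  · rintro ⟨j, hj⟩
    exact ⟨j + 1, (circOccAt_cons.1 hj).2⟩

/-- If `A` occurs in circular `T` and `Σ^ℓ_T(A) = {c}`, then for every
`Z` such that `AZ` occurs in circular `T`, `Σ^r_T(cAZ) = Σ^r_T(AZ)`; in particular `AZ`
is right-maximal iff `cAZ` is right-maximal. -/
theorem unique_left_ext_right_sets (σ : ℕ) (T : List ℕ) (hT : Wellformed σ T)
    (A : List ℕ) (c : ℕ) (hA : OccursCirc T A) (hc : SigmaL T A = {c}) :
    ∀ Z : List ℕ, OccursCirc T (A ++ Z) →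
      SigmaR T (c :: (A ++ Z)) = SigmaR T (A ++ Z) ∧
      (RightMaximal T (A ++ Z) ↔ RightMaximal T (c :: (A ++ Z))) := by
  have hn : 0 < T.length := by
    obtain ⟨S, rfl, _⟩ := hT; simp
  intro Z _
  have hset : SigmaR T (c :: (A ++ Z)) = SigmaR T (A ++ Z) := by
    ext b
    simp only [SigmaR, Finset.mem_filter, and_congr_right_iff]
    intro _
    have h1 : (c :: (A ++ Z)) ++ [b] = c :: (A ++ (Z ++ [b])) := by simp
    have h2 : (A ++ Z) ++ [b] = A ++ (Z ++ [b]) := by simp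
    rw [h1, h2]
    exact (occ_cons_iff hn hc (Z ++ [b])).symm
  exact ⟨hset, by unfold RightMaximal; rw [hset]⟩
end
end
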